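/- arXiv:1606.03792 — 7 statements merged into one kernel-verified Lean document; each statement's English description precedes it below -/
import Mathlib

section
/- Let C ⊆ ℝ^m be a convex set, and let K, L be normal cones of C at points of C with K ⊆ L, where L is a proper normal cone (i.e., L ≠ ℝ^m and L is not the normal cone of all of C). Then K is an exposed face of L. -/
/-- The normal cone of a convex set `C` at a point `x`. -/
def normalCone {m : ℕ} (C : Set (EuclideanSpace ℝ (Fin m))) (x : EuclideanSpace ℝ (Fin m)) :
    Set (EuclideanSpace ℝ (Fin m)) :=
  {u | ∀ y ∈ C, @inner ℝ _ _ u (y - x) ≤ 0}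

/-!
If `x, y ∈ C`, every `u ∈ N_C(y)` satisfies `⟪x - y, u⟫ ≤ 0`, and `u` lies in `N_C(x)` as well
exactly when equality holds. Hence `N_C(x) ⊆ N_C(y)` is the face of `N_C(y)` on which the
linear functional `⟪x - y, ·⟫` attains its maximum value `0`.
-/

open RealInnerProductSpace

theorem isExposed_setOf_eq_of_forall_le {𝕜 E : Type*} [TopologicalSpace 𝕜] [Semiring 𝕜]
    [PartialOrder 𝕜] [AddCommMonoid E] [TopologicalSpace E] [Module 𝕜 E] {A : Set E}
    (l : StrongDual 𝕜 E) {c : 𝕜} (hle : ∀ x ∈ A, l x ≤ c) :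
    IsExposed 𝕜 A {x ∈ A | l x = c} := by
  rintro ⟨w, hwA, hwc⟩
  refine ⟨l, Set.ext fun x => ⟨?_, ?_⟩⟩
  · rintro ⟨hxA, hxc⟩
    exact ⟨hxA, fun y hy => hxc ▸ hle y hy⟩
  · rintro ⟨hxA, hmax⟩
    exact ⟨hxA, le_antisymm (hle x hxA) (hwc ▸ hmax w hwA)⟩

section NormalCone

variable {m : ℕ} {C : Set (EuclideanSpace ℝ (Fin m))} {x y u : EuclideanSpace ℝ (Fin m)}

theorem inner_sub_le_zero_of_mem_normalCone (hx : x ∈ C) (hu : u ∈ normalCone C y) :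
    ⟪x - y, u⟫ ≤ 0 :=
  real_inner_comm u (x - y) ▸ hu x hx

theorem normalCone_inter_normalCone (hx : x ∈ C) (hy : y ∈ C) :
    normalCone C x ∩ normalCone C y = {u ∈ normalCone C y | ⟪x - y, u⟫ = 0} := by
  ext u
  constructor
  · rintro ⟨hux, huy⟩
    refine ⟨huy, le_antisymm (inner_sub_le_zero_of_mem_normalCone hx huy) ?_⟩
    have := hux y hy
    rw [← neg_sub, inner_neg_right, real_inner_comm] at this
    linarith
  · rintro ⟨huy, hu0⟩
    refine ⟨fun z hz => ?_, huy⟩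
    have hsplit : z - x = (z - y) - (x - y) := by abel
    rw [hsplit, inner_sub_right, real_inner_comm (x - y) u, hu0, sub_zero]
    exact huy z hz

end NormalCone

theorem stmt0_general {m : ℕ} (C : Set (EuclideanSpace ℝ (Fin m)))
    (x y : EuclideanSpace ℝ (Fin m)) (hx : x ∈ C) (hy : y ∈ C)
    (K L : Set (EuclideanSpace ℝ (Fin m)))
    (hK : K = normalCone C x) (hL : L = normalCone C y)
    (hKL : K ⊆ L) :
    IsExposed ℝ L K := by
  subst hK hL
  have hface : normalCone C x = {u ∈ normalCone C y | innerSL ℝ (x - y) u = 0} := by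
    rw [← Set.inter_eq_left.2 hKL, normalCone_inter_normalCone hx hy]
    rfl
  rw [hface]
  exact isExposed_setOf_eq_of_forall_le _ fun u hu => inner_sub_le_zero_of_mem_normalCone hx hu

/-- if `K ⊆ L` are normal cones of a convex set `C` at points of `C` and `L`
is a proper normal cone (`L ≠ ℝ^m` and `L` is not the normal cone of all of `C`),
then `K` is an exposed face of `L`. -/
theorem stmt0 {m : ℕ} (C : Set (EuclideanSpace ℝ (Fin m))) (hC : Convex ℝ C)
    (x y : EuclideanSpace ℝ (Fin m)) (hx : x ∈ C) (hy : y ∈ C)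
    (K L : Set (EuclideanSpace ℝ (Fin m)))
    (hK : K = normalCone C x) (hL : L = normalCone C y)
    (hKL : K ⊆ L)
    (hLuniv : L ≠ Set.univ)
    (hLtop : L ≠ {u | ∀ z ∈ C, ∀ w ∈ C, @inner ℝ _ _ u (z - w) ≤ 0}) :
    IsExposed ℝ L K :=
  stmt0_general C x y hx hy K L hK hL hKL
end

section
/- Let C be a convex subset of ℝ^m with nonempty interior that is a proper convex set (has a proper exposed face). If for every x in the boundary of C the normal cone N_C(x), whenever it is a minimal element among nonzero normal cones of C, is a ray, then every coatom of the lattice of exposed faces of C is a smooth exposed face (i.e., its normal cone is one-dimensional). -/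
/-- A ray `{α u | α ≥ 0}` for some nonzero `u`. -/
def IsRay {m : ℕ} (R : Set (EuclideanSpace ℝ (Fin m))) : Prop :=
  ∃ u : EuclideanSpace ℝ (Fin m), u ≠ 0 ∧ R = {v | ∃ a : ℝ, 0 ≤ a ∧ v = a • u}

/-- A coatom of the lattice of exposed faces of `C`: an exposed face `F ≠ C` such that any
exposed face strictly containing it is `C`. -/
def IsCoatomExposedFace {m : ℕ} (C F : Set (EuclideanSpace ℝ (Fin m))) : Prop :=
  IsExposed ℝ C F ∧ F ≠ C ∧ ∀ G, IsExposed ℝ C G → F ⊆ G → G = F ∨ G = C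

/-!
Let `x` lie in the relative interior of a coatom `F`. Any nonzero normal vector `v` at `x`
exposes a face containing `x`, hence containing all of `F` (a face meeting the relative interior
of `F` contains `F`), and this face is not `C` because `C` has interior points; by maximality it
is `F`. So every nonzero vector of `N_C(x)` exposes exactly `F`, which forces `N_C(x)` to be
minimal among the nonzero normal cones: if `0 ≠ N_C(y) ⊆ N_C(x)`, then `y ∈ F`, and every
`v ∈ N_C(x)` is maximised on `C` at `y`. The hypothesis then says `N_C(x)` is a ray.
-/

open Set Filter Topology

section General

variable {E : Type*} [NormedAddCommGroup E] [NormedSpace ℝ E] {C F G : Set E} {x z : E}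

theorem exists_mem_openSegment_of_mem_intrinsicInterior (hx : x ∈ intrinsicInterior ℝ F)
    (hz : z ∈ F) : ∃ w ∈ F, x ∈ openSegment ℝ z w := by
  obtain ⟨x, hx, rfl⟩ := hx
  let γ : ℝ → affineSpan ℝ F := fun t ↦
    ⟨AffineMap.lineMap z (x : E) t, AffineMap.lineMap_mem _ (subset_affineSpan ℝ F hz) x.2⟩
  have hγ : Continuous γ := AffineMap.lineMap_continuous.subtype_mk _
  have hγ1 : γ 1 = x := Subtype.ext (AffineMap.lineMap_apply_one _ _)
  have hnear : ∀ᶠ t in 𝓝 (1 : ℝ), γ t ∈ interior (Subtype.val ⁻¹' F) :=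
    hγ.continuousAt.preimage_mem_nhds (hγ1 ▸ isOpen_interior.mem_nhds hx)
  obtain ⟨t, hγt, ht⟩ := ((hnear.filter_mono nhdsWithin_le_nhds).and self_mem_nhdsWithin).exists
    (f := 𝓝[>] (1 : ℝ))
  have ht : (1 : ℝ) < t := ht
  refine ⟨γ t, interior_subset (s := Subtype.val ⁻¹' F) hγt, ?_⟩
  have hx_eq : AffineMap.lineMap z (γ t : E) t⁻¹ = x := by
    simp [γ, inv_mul_cancel₀ (by positivity : t ≠ 0)]
  exact hx_eq ▸ lineMap_mem_openSegment ℝ _ _ ⟨by positivity, inv_lt_one_of_one_lt₀ ht⟩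

theorem IsExtreme.subset_of_mem_intrinsicInterior (hG : IsExtreme ℝ C G) (hFC : F ⊆ C)
    (hx : x ∈ intrinsicInterior ℝ F) (hxG : x ∈ G) : F ⊆ G := fun z hz ↦ by
  obtain ⟨w, hw, hxzw⟩ := exists_mem_openSegment_of_mem_intrinsicInterior hx hz
  exact hG.2 (hFC hz) (hFC hw) hxG hxzw

theorem ContinuousLinearMap.eq_zero_of_mem_toExposed_of_mem_interior {l : StrongDual ℝ E}
    (hxl : x ∈ l.toExposed C) (hx : x ∈ interior C) : l = 0 :=
  IsLocalMax.hasFDerivAt_eq_zero (mem_of_superset (mem_interior_iff_mem_nhds.1 hx) hxl.2)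
    l.hasFDerivAt

theorem IsExposed.eq_self_of_mem_interior (hF : IsExposed ℝ C F) (hxF : x ∈ F)
    (hx : x ∈ interior C) : F = C := by
  obtain ⟨l, rfl⟩ := hF ⟨x, hxF⟩
  obtain rfl := ContinuousLinearMap.eq_zero_of_mem_toExposed_of_mem_interior hxF hx
  simp

end General

section NormalCone

variable {m : ℕ} {C F : Set (EuclideanSpace ℝ (Fin m))} {x y u : EuclideanSpace ℝ (Fin m)}

theorem mem_normalCone_iff_mem_toExposed (hx : x ∈ C) :
    u ∈ normalCone C x ↔ x ∈ (innerSL ℝ u).toExposed C := by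
  simp [normalCone, ContinuousLinearMap.toExposed, hx, inner_sub_right]

theorem zero_mem_normalCone : (0 : EuclideanSpace ℝ (Fin m)) ∈ normalCone C x := by
  simp [normalCone]

theorem normalCone_ne_singleton_zero_iff :
    normalCone C x ≠ {0} ↔ ∃ u ∈ normalCone C x, u ≠ 0 := by
  simp [Ne, eq_singleton_iff_unique_mem, zero_mem_normalCone]

theorem eq_zero_of_mem_toExposed_innerSL_of_mem_interior (hx : x ∈ interior C)
    (hu : x ∈ (innerSL ℝ u).toExposed C) : u = 0 := by
  rw [← norm_eq_zero, ← innerSL_apply_norm ℝ u,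
    ContinuousLinearMap.eq_zero_of_mem_toExposed_of_mem_interior hu hx, norm_zero]

theorem normalCone_ne_singleton_zero_of_mem_frontier (hC : Convex ℝ C)
    (hint : (interior C).Nonempty) (hx : x ∈ frontier C) : normalCone C x ≠ {0} := by
  obtain ⟨f, hf, hfx⟩ := geometric_hahn_banach_of_nonempty_interior_point hC hx.2 hint
  refine normalCone_ne_singleton_zero_iff.2 ⟨(InnerProductSpace.toDual ℝ _).symm f, ?_, ?_⟩
  · intro y hy
    simpa [inner_sub_right, InnerProductSpace.toDual_symm_apply] using hfx y hy
  · simpa using hf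

theorem IsCoatomExposedFace.toExposed_innerSL_eq (hint : (interior C).Nonempty)
    (hF : IsCoatomExposedFace C F) (hx : x ∈ intrinsicInterior ℝ F) (hu : u ∈ normalCone C x)
    (hu0 : u ≠ 0) : (innerSL ℝ u).toExposed C = F := by
  obtain ⟨hFexp, -, hFmax⟩ := hF
  have hxC : x ∈ C := hFexp.subset (intrinsicInterior_subset hx)
  have hFG : F ⊆ (innerSL ℝ u).toExposed C :=
    ContinuousLinearMap.toExposed.isExposed.isExtreme.subset_of_mem_intrinsicInterior
      hFexp.subset hx ((mem_normalCone_iff_mem_toExposed hxC).1 hu)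
  refine (hFmax _ ContinuousLinearMap.toExposed.isExposed hFG).resolve_right fun hGC ↦ hu0 ?_
  obtain ⟨z, hz⟩ := hint
  exact eq_zero_of_mem_toExposed_innerSL_of_mem_interior hz (hGC.symm ▸ interior_subset hz)

theorem normalCone_eq_of_subset_of_forall_toExposed_eq
    (hface : ∀ v ∈ normalCone C x, v ≠ 0 → (innerSL ℝ v).toExposed C = F) (hy : y ∈ C)
    (hy0 : normalCone C y ≠ {0}) (hyx : normalCone C y ⊆ normalCone C x) :
    normalCone C y = normalCone C x := by
  obtain ⟨u, hu, hu0⟩ := normalCone_ne_singleton_zero_iff.1 hy0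
  have hyF : y ∈ F := hface u (hyx hu) hu0 ▸ (mem_normalCone_iff_mem_toExposed hy).1 hu
  refine hyx.antisymm fun v hv ↦ ?_
  rcases eq_or_ne v 0 with rfl | hv0
  · exact zero_mem_normalCone
  · exact (mem_normalCone_iff_mem_toExposed hy).2 (hface v hv hv0 ▸ hyF)

end NormalCone

theorem stmt3_general {m : ℕ} (C : Set (EuclideanSpace ℝ (Fin m))) (hC : Convex ℝ C)
    (hint : (interior C).Nonempty)
    (hmin : ∀ x ∈ frontier C,
      (normalCone C x ≠ {0} ∧
        ∀ y ∈ C, normalCone C y ≠ {0} → normalCone C y ⊆ normalCone C x →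
          normalCone C y = normalCone C x) →
      IsRay (normalCone C x)) :
    ∀ F, IsCoatomExposedFace C F → ∀ x ∈ intrinsicInterior ℝ F, IsRay (normalCone C x) := by
  intro F hF x hx
  have hxF : x ∈ F := intrinsicInterior_subset hx
  have hxfr : x ∈ frontier C :=
    ⟨subset_closure (hF.1.subset hxF), fun hxi ↦ hF.2.1 (hF.1.eq_self_of_mem_interior hxF hxi)⟩
  refine hmin x hxfr ⟨normalCone_ne_singleton_zero_of_mem_frontier hC hint hxfr, ?_⟩
  exact fun y hy ↦ normalCone_eq_of_subset_of_forall_toExposed_eq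
    (fun _ hv hv0 ↦ hF.toExposed_innerSL_eq hint hx hv hv0) hy

/-- if `C` is a proper convex set (nonempty interior and a proper exposed face)
such that every normal cone at a boundary point of `C` which is minimal among nonzero normal
cones of `C` is a ray, then every coatom of the lattice of exposed faces of `C` is a smooth
exposed face: its normal cone (the normal cone at any relative interior point) is a ray. -/
theorem stmt3 {m : ℕ} (C : Set (EuclideanSpace ℝ (Fin m))) (hC : Convex ℝ C)
    (hint : (interior C).Nonempty)
    (hproper : ∃ F, IsExposed ℝ C F ∧ F ≠ ∅ ∧ F ≠ C)
    (hmin : ∀ x ∈ frontier C,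
      (normalCone C x ≠ {0} ∧
        ∀ y ∈ C, normalCone C y ≠ {0} → normalCone C y ⊆ normalCone C x →
          normalCone C y = normalCone C x) →
      IsRay (normalCone C x)) :
    ∀ F, IsCoatomExposedFace C F → ∀ x ∈ intrinsicInterior ℝ F, IsRay (normalCone C x) :=
  stmt3_general C hC hint hmin
end

section
/- Let C be a convex body in ℝ^m with nonempty interior. Then C is strictly convex if and only if every proper exposed face of C that is maximal among proper exposed faces (coatom) is a singleton, and this holds if and only if every boundary point of C is an exposed point of C. -/
/-- A coatom of the exposed-face lattice in the sense of maximal proper exposed faces: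
a proper exposed face (`≠ ∅, C`) such that any proper exposed face containing it equals it. -/
def IsMaxProperExposedFace {m : ℕ} (C F : Set (EuclideanSpace ℝ (Fin m))) : Prop :=
  IsExposed ℝ C F ∧ F ≠ ∅ ∧ F ≠ C ∧
    ∀ G, IsExposed ℝ C G → G ≠ C → F ⊆ G → G = F

/-!
A proper exposed face never meets the interior, since a linear functional maximized at an
interior point vanishes. Hence a strictly convex body has no proper exposed face with two points,
and every boundary point, which lies on a supporting hyperplane, is exposed. Conversely, if every
boundary point is exposed, hence extreme, no open segment of the body can touch the boundary.
Finally, a proper exposed face is exposed inside any larger proper exposed face by its own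
functional, so the affine span strictly grows; in finite dimension this makes every proper exposed
face lie in a maximal one, which links the coatom condition to the boundary condition.
-/

open Set

section Affine

variable {𝕜 E : Type*} [Ring 𝕜] [PartialOrder 𝕜] [TopologicalSpace 𝕜] [AddCommGroup E]
  [TopologicalSpace E] [Module 𝕜 E] {A F G : Set E}

theorem IsExposed.affineSpan_lt (hF : IsExposed 𝕜 A F) (hFne : F.Nonempty) (hFG : F ⊂ G)
    (hGA : G ⊆ A) : affineSpan 𝕜 F < affineSpan 𝕜 G := by
  obtain ⟨l, rfl⟩ := hF hFne
  obtain ⟨f, hf⟩ := hFne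
  obtain ⟨g, hgG, hgF⟩ := exists_of_ssubset hFG
  refine (affineSpan_mono 𝕜 hFG.subset).lt_of_ne fun hspan => hgF ⟨hGA hgG, fun y hy => ?_⟩
  have hg : g ∈ affineSpan 𝕜 _ := hspan ▸ subset_affineSpan 𝕜 G hgG
  have hlevel : l.toLinearMap.toAffineMap '' {x ∈ A | ∀ y ∈ A, l y ≤ l x} ⊆ {l f} := by
    rintro _ ⟨x, hx, rfl⟩
    exact le_antisymm (hf.2 x hx.1) (hx.2 f hf.1)
  have hlg : l g = l f := by
    rw [← AffineSubspace.mem_affineSpan_singleton 𝕜 𝕜]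
    refine affineSpan_mono 𝕜 hlevel ?_
    rw [← AffineSubspace.map_span]
    exact AffineSubspace.mem_map_of_mem _ hg
  exact hlg ▸ hf.2 y hy

end Affine

section Frontier

variable {𝕜 E : Type*} [Semiring 𝕜] [PartialOrder 𝕜] [AddCommMonoid E] [TopologicalSpace E]
  [Module 𝕜 E] {A : Set E}

theorem strictConvex_of_frontier_subset_extremePoints (hA : Convex 𝕜 A) (hAc : IsClosed A)
    (h : frontier A ⊆ A.extremePoints 𝕜) : StrictConvex 𝕜 A := by
  intro x hx y hy hxy a b ha hb hab
  by_contra hint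
  have hfr : a • x + b • y ∈ frontier A :=
    hAc.frontier_eq ▸ ⟨hA hx hy ha.le hb.le hab, hint⟩
  obtain ⟨hxz, hyz⟩ := (mem_extremePoints.1 (h hfr)).2 x hx y hy ⟨a, b, ha, hb, hab, rfl⟩
  exact hxy (hxz.trans hyz.symm)

end Frontier

section Normed

variable {E : Type*} [NormedAddCommGroup E] [NormedSpace ℝ E] {A F : Set E} {x : E}

theorem StrongDual.eq_zero_of_isMaxOn {l : StrongDual ℝ E} (hx : x ∈ interior A)
    (hl : IsMaxOn l A x) : l = 0 :=
  (hl.isLocalMax (mem_interior_iff_mem_nhds.1 hx)).hasFDerivAt_eq_zero l.hasFDerivAt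

theorem IsExposed.eq_of_mem_interior (hF : IsExposed ℝ A F) (hxF : x ∈ F)
    (hx : x ∈ interior A) : F = A := by
  obtain ⟨l, rfl⟩ := hF ⟨x, hxF⟩
  obtain rfl := StrongDual.eq_zero_of_isMaxOn hx hxF.2
  simp

theorem StrictConvex.subsingleton_of_isExposed (hA : StrictConvex ℝ A) (hF : IsExposed ℝ A F)
    (hFA : F ≠ A) : F.Subsingleton := by
  intro x hx y hy
  by_contra hxy
  have hmid : (1 / 2 : ℝ) • x + (1 / 2 : ℝ) • y ∈ F :=
    hF.convex hA.convex hx hy (by norm_num) (by norm_num) (by norm_num)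
  exact hFA (hF.eq_of_mem_interior hmid
    (hA (hF.subset hx) (hF.subset hy) hxy (by norm_num) (by norm_num) (by norm_num)))

theorem exists_isExposed_ne_of_mem_frontier (hA : Convex ℝ A) (hAc : IsClosed A)
    (hint : (interior A).Nonempty) (hx : x ∈ frontier A) :
    ∃ F, IsExposed ℝ A F ∧ x ∈ F ∧ F ≠ A := by
  rw [hAc.frontier_eq] at hx
  obtain ⟨l, u, hl0, hlA, hlx⟩ := geometric_hahn_banach_of_nonempty_interior hA
    (convex_singleton x) (disjoint_singleton_right.2 hx.2) hint (singleton_nonempty x)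
  have hxF : x ∈ l.toExposed A := ⟨hx.1, fun y hy => (hlA y hy).trans (hlx x rfl)⟩
  refine ⟨l.toExposed A, ContinuousLinearMap.toExposed.isExposed, hxF, fun hFA => hl0 ?_⟩
  obtain ⟨a, ha⟩ := hint
  have haF : a ∈ l.toExposed A := hFA.symm ▸ interior_subset ha
  exact StrongDual.eq_zero_of_isMaxOn ha haF.2

theorem IsExposed.exists_maximal_ne [FiniteDimensional ℝ E] (hF : IsExposed ℝ A F)
    (hFne : F.Nonempty) (hFA : F ≠ A) :
    ∃ G, IsExposed ℝ A G ∧ G ≠ A ∧ F ⊆ G ∧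
      ∀ G', IsExposed ℝ A G' → G' ≠ A → G ⊆ G' → G' = G := by
  obtain ⟨G, ⟨hG, hGA, hFG⟩, hmax⟩ :=
    (InvImage.wf (fun G : Set E => (affineSpan ℝ G).direction) wellFounded_gt).has_min
      {G | IsExposed ℝ A G ∧ G ≠ A ∧ F ⊆ G} ⟨F, hF, hFA, subset_rfl⟩
  refine ⟨G, hG, hGA, hFG, fun G' hG' hG'A hGG' => ?_⟩
  by_contra hne
  have hGne : G.Nonempty := hFne.mono hFG
  refine hmax G' ⟨hG', hG'A, hFG.trans hGG'⟩ (AffineSubspace.direction_lt_of_nonempty ?_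
    ((affineSpan_nonempty ℝ).2 hGne))
  exact hG.affineSpan_lt hGne (hGG'.ssubset_of_ne (Ne.symm hne)) hG'.subset

end Normed

/-- a convex body `C` with nonempty interior is strictly convex iff every
coatom of the lattice of exposed faces of `C` is a singleton, and iff every boundary point
of `C` is an exposed point of `C`. -/
theorem stmt4 {m : ℕ} (C : Set (EuclideanSpace ℝ (Fin m))) (hC : Convex ℝ C)
    (hcomp : IsCompact C) (hint : (interior C).Nonempty) :
    (StrictConvex ℝ C ↔ ∀ F, IsMaxProperExposedFace C F → ∃ x, F = {x}) ∧
    (StrictConvex ℝ C ↔ ∀ x ∈ frontier C, IsExposed ℝ C {x}) := by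
  have hcl : IsClosed C := hcomp.isClosed
  have strict_imp_coatoms (hS : StrictConvex ℝ C) (F) (hF : IsMaxProperExposedFace C F) :
      ∃ x, F = {x} := by
    obtain ⟨x, hx⟩ := nonempty_iff_ne_empty.2 hF.2.1
    exact ⟨x, (hS.subsingleton_of_isExposed hF.1 hF.2.2.1).eq_singleton_of_mem hx⟩
  have strict_imp_boundary (hS : StrictConvex ℝ C) (z) (hz : z ∈ frontier C) :
      IsExposed ℝ C {z} := by
    obtain ⟨F, hF, hzF, hFC⟩ := exists_isExposed_ne_of_mem_frontier hC hcl hint hz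
    rwa [(hS.subsingleton_of_isExposed hF hFC).eq_singleton_of_mem hzF] at hF
  have boundary_imp_strict (h : ∀ x ∈ frontier C, IsExposed ℝ C {x}) : StrictConvex ℝ C :=
    strictConvex_of_frontier_subset_extremePoints hC hcl fun z hz =>
      exposedPoints_subset_extremePoints (mem_exposedPoints_iff_exposed_singleton.2 (h z hz))
  have coatoms_imp_boundary (hA : ∀ F, IsMaxProperExposedFace C F → ∃ x, F = {x}) (z)
      (hz : z ∈ frontier C) : IsExposed ℝ C {z} := by
    obtain ⟨F, hF, hzF, hFC⟩ := exists_isExposed_ne_of_mem_frontier hC hcl hint hz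
    obtain ⟨G, hG, hGC, hFG, hGmax⟩ := hF.exists_maximal_ne ⟨z, hzF⟩ hFC
    obtain ⟨x, rfl⟩ := hA G ⟨hG, Nonempty.ne_empty ⟨z, hFG hzF⟩, hGC, hGmax⟩
    rwa [← mem_singleton_iff.1 (hFG hzF)] at hG
  exact ⟨⟨strict_imp_coatoms, boundary_imp_strict ∘ coatoms_imp_boundary⟩,
    strict_imp_boundary, boundary_imp_strict⟩
end

section
/- Let M_n denote the set of n×n density matrices (positive semidefinite hermitian matrices of trace one) and let S ⊆ M_n(ℂ) be an operator system (a complex subspace containing the identity, closed under adjoints). Let π be the orthogonal projection from hermitian n×n matrices onto the real subspace S_h of hermitian elements of S with respect to the Hilbert–Schmidt inner product ⟨a,b⟩ = tr(a*b). Then the state space M(S) := {s ∈ S_h | the functional a ↦ ⟨s, a⟩ is positive on positive semidefinite elements of S and takes value 1 at the identity} is equal to π(M_n), the projection of the set of density matrices onto S_h. -/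
/-!
Work in the real Hilbert space of matrices with the Hilbert–Schmidt inner product `re tr(aᴴ b)`.
If a hermitian state `s` of `S` were not the projection of a density matrix, Hahn–Banach would
separate it from the compact convex projection of `M_n` by some `a ∈ S_h`:
`re tr(a ρ) ≤ u < re tr(a s)` for all density matrices `ρ`. Testing on pure states gives
`u • 1 - a ≥ 0`, an element of `S` on which `s` must be nonnegative, i.e. `tr(a s) ≤ u`.
Conversely `tr(π(ρ) a) = tr(ρ a) ≥ 0` for positive `a ∈ S`. States are hermitian because a
functional that is positive on `S` is real on each hermitian `u ∈ S`, the difference of the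
positive elements `‖u‖ • 1 + u` and `‖u‖ • 1`.
-/

open ComplexOrder Matrix
open scoped RealInnerProductSpace

theorem Submodule.exists_sub_mem_orthogonal_of_forall_inner_le {E : Type*}
    [NormedAddCommGroup E] [InnerProductSpace ℝ E] [FiniteDimensional ℝ E]
    (W : Submodule ℝ E) {K : Set E} (hKconv : Convex ℝ K) (hKcomp : IsCompact K)
    {x : E} (hx : x ∈ W) (h : ∀ a ∈ W, ∀ u : ℝ, (∀ k ∈ K, ⟪a, k⟫ ≤ u) → ⟪a, x⟫ ≤ u) :
    ∃ k ∈ K, k - x ∈ Wᗮ := by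
  suffices x ∈ W.starProjection '' K by
    obtain ⟨k, hk, rfl⟩ := this
    exact ⟨k, hk, W.sub_starProjection_mem_orthogonal k⟩
  by_contra hxK
  obtain ⟨f, u, hfK, hfx⟩ := geometric_hahn_banach_closed_point
    (hKconv.linear_image W.starProjection.toLinearMap)
    (hKcomp.image W.starProjection.continuous).isClosed hxK
  set a := W.starProjection ((InnerProductSpace.toDual ℝ E).symm f)
  have hfa : ∀ y, ⟪a, y⟫ = f (W.starProjection y) := fun y => by
    rw [W.inner_starProjection_left_eq_right, InnerProductSpace.toDual_symm_apply]
  have hax := h a (W.starProjection_apply_mem _) u fun k hk => by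
    rw [hfa]
    exact (hfK _ ⟨k, hk, rfl⟩).le
  rw [hfa, W.starProjection_eq_self_iff.mpr hx] at hax
  linarith

namespace Matrix

variable {m : Type*} [Fintype m]

theorem trace_vecMulVec_mul {R : Type*} [CommSemiring R] (v w : m → R) (a : Matrix m m R) :
    trace (vecMulVec v w * a) = w ⬝ᵥ a *ᵥ v := by
  rw [vecMulVec_mul, trace_vecMulVec, dotProduct_comm, dotProduct_mulVec]

theorem PosSemidef.trace_mul_nonneg {𝕜 : Type*} [RCLike 𝕜] {ρ a : Matrix m m 𝕜}
    (hρ : ρ.PosSemidef) (ha : a.PosSemidef) : 0 ≤ trace (ρ * a) := by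
  obtain ⟨k, v, rfl⟩ := posSemidef_iff_eq_sum_vecMulVec.mp hρ
  simp only [Finset.sum_mul, trace_sum, trace_vecMulVec_mul]
  exact Finset.sum_nonneg fun i _ => ha.dotProduct_mulVec_nonneg (v i)

variable (m) in
/-- The real Hilbert–Schmidt space of matrices, modelled on `EuclideanSpace` since `Matrix` has no
inner product instance. -/
noncomputable def toHilbertSchmidt : Matrix m m ℂ ≃ₗ[ℝ] EuclideanSpace ℂ (m × m) :=
  (ofLinearEquiv ℝ).symm ≪≫ₗ (LinearEquiv.curry ℝ ℂ m m).symm ≪≫ₗ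
    (WithLp.linearEquiv 2 ℝ (m × m → ℂ)).symm

theorem inner_toHilbertSchmidt (a b : Matrix m m ℂ) :
    ⟪toHilbertSchmidt m a, toHilbertSchmidt m b⟫ = (trace (aᴴ * b)).re := by
  simp only [PiLp.inner_apply, trace, diag, mul_apply, conjTranspose_apply, Complex.re_sum,
    Fintype.sum_prod_type]
  rw [Finset.sum_comm]
  refine Finset.sum_congr rfl fun i _ => Finset.sum_congr rfl fun j _ => ?_
  simp [toHilbertSchmidt, Complex.inner, mul_comm]

theorem PosSemidef.norm_toHilbertSchmidt_le {ρ : Matrix m m ℂ} (hρ : ρ.PosSemidef) :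
    ‖toHilbertSchmidt m ρ‖ ≤ (trace ρ).re := by
  obtain ⟨k, v, rfl⟩ := posSemidef_iff_eq_sum_vecMulVec.mp hρ
  rw [map_sum, trace_sum, Complex.re_sum]
  refine (norm_sum_le _ _).trans_eq (Finset.sum_congr rfl fun i _ => ?_)
  set w := v i
  obtain ⟨r, hr, hrw⟩ : ∃ r : ℝ, 0 ≤ r ∧ (r : ℂ) = star w ⬝ᵥ w :=
    RCLike.nonneg_iff_exists_ofReal.mp (dotProduct_star_self_nonneg w)
  have htr : trace (vecMulVec w (star w)) = r := by
    rw [trace_vecMulVec, dotProduct_comm, ← hrw]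
  have hsq : ‖toHilbertSchmidt m (vecMulVec w (star w))‖ ^ 2 = r ^ 2 := by
    rw [← real_inner_self_eq_norm_sq, inner_toHilbertSchmidt,
      (posSemidef_vecMulVec_self_star w).isHermitian.eq, vecMulVec_mul_vecMulVec, trace_vecMulVec,
      dotProduct_smul, ← hrw, dotProduct_comm, ← hrw]
    simp [sq]
  rw [htr, Complex.ofReal_re]
  exact (sq_eq_sq₀ (norm_nonneg _) hr).mp hsq

variable (m) in
def densityMatrices : Set (Matrix m m ℂ) := {ρ | ρ.PosSemidef ∧ trace ρ = 1}

theorem convex_densityMatrices : Convex ℝ (densityMatrices m) := by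
  rintro ρ ⟨hρ, hρ1⟩ σ ⟨hσ, hσ1⟩ a b ha hb hab
  refine ⟨(hρ.smul ha).add (hσ.smul hb), ?_⟩
  rw [trace_add, trace_smul, trace_smul, hρ1, hσ1, ← add_smul, hab, one_smul]

theorem isClosed_densityMatrices : IsClosed (densityMatrices m) := by
  classical
  open scoped Matrix.Norms.L2Operator MatrixOrder in
  have hpsd : {ρ : Matrix m m ℂ | ρ.PosSemidef} = Set.Ici 0 :=
    Set.ext fun ρ => nonneg_iff_posSemidef.symm
  exact (hpsd ▸ isClosed_Ici).inter (isClosed_eq continuous_id.matrix_trace continuous_const)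

theorem isCompact_image_toHilbertSchmidt_densityMatrices :
    IsCompact (toHilbertSchmidt m '' densityMatrices m) := by
  rw [LinearEquiv.image_eq_preimage_symm]
  refine Metric.isCompact_of_isClosed_isBounded
    (isClosed_densityMatrices.preimage
      (LinearMap.continuous_of_finiteDimensional (toHilbertSchmidt m).symm.toLinearMap))
    (isBounded_iff_forall_norm_le.mpr ⟨1, fun x ⟨hρ, hρ1⟩ => ?_⟩)
  simpa [hρ1] using hρ.norm_toHilbertSchmidt_le

theorem eq_of_forall_re_trace_mul_eq {S : Submodule ℂ (Matrix m m ℂ)} {x y : Matrix m m ℂ}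
    (hx : x ∈ S) (hxh : x.IsHermitian) (hy : y ∈ S) (hyh : y.IsHermitian)
    (h : ∀ u ∈ S, u.IsHermitian → (trace (u * x)).re = (trace (u * y)).re) : x = y := by
  have hd : ⟪toHilbertSchmidt m (x - y), toHilbertSchmidt m (x - y)⟫ = 0 := by
    rw [inner_toHilbertSchmidt, (hxh.sub hyh).eq, mul_sub, trace_sub, Complex.sub_re,
      h _ (S.sub_mem hx hy) (hxh.sub hyh), sub_self]
  exact sub_eq_zero.mp ((toHilbertSchmidt m).map_eq_zero_iff.mp (inner_self_eq_zero.mp hd))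

theorem isHermitian_of_im_trace_conjTranspose_mul_eq_zero {S : Submodule ℂ (Matrix m m ℂ)}
    (hstar : ∀ a ∈ S, aᴴ ∈ S) {s : Matrix m m ℂ} (hs : s ∈ S)
    (h : ∀ u ∈ S, u.IsHermitian → (trace (sᴴ * u)).im = 0) : s.IsHermitian := by
  set d := s - sᴴ
  have hw : (Complex.I • d).IsHermitian := by
    simp [d, IsHermitian, conjTranspose_smul, conjTranspose_sub, smul_sub, neg_add_eq_sub]
  have hconj : starRingEnd ℂ (trace (sᴴ * (Complex.I • d))) = trace (s * (Complex.I • d)) := by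
    rw [← Complex.star_def, ← trace_conjTranspose, conjTranspose_mul, conjTranspose_conjTranspose,
      hw.eq, trace_mul_comm]
  have hd : trace (dᴴ * (Complex.I • d)) =
      trace (sᴴ * (Complex.I • d)) - starRingEnd ℂ (trace (sᴴ * (Complex.I • d))) := by
    rw [hconj, conjTranspose_sub, conjTranspose_conjTranspose, sub_mul, trace_sub]
  rw [Complex.sub_conj, h _ (S.smul_mem _ (S.sub_mem hs (hstar s hs))) hw, Matrix.mul_smul,
    trace_smul] at hd
  have hd0 : d = 0 := trace_conjTranspose_mul_self_eq_zero_iff.mp (by simpa using hd)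
  exact (sub_eq_zero.mp hd0).symm

variable [DecidableEq m]

theorem IsHermitian.im_map_eq_zero_of_nonneg {S : Submodule ℂ (Matrix m m ℂ)} (h1 : 1 ∈ S)
    {f : Matrix m m ℂ →ₗ[ℂ] ℂ} (hf : ∀ a ∈ S, a.PosSemidef → 0 ≤ f a)
    {u : Matrix m m ℂ} (huh : u.IsHermitian) (hu : u ∈ S) : (f u).im = 0 := by
  open scoped Matrix.Norms.L2Operator MatrixOrder in
  have hp : (‖u‖ • 1 + u).PosSemidef := by
    rw [← nonneg_iff_posSemidef, ← neg_le_iff_add_nonneg', ← Algebra.algebraMap_eq_smul_one]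
    exact huh.isSelfAdjoint.neg_algebraMap_norm_le_self
  have h₁ := Complex.nonneg_iff.mp (hf 1 h1 PosSemidef.one)
  have h₂ := Complex.nonneg_iff.mp (hf _ (S.add_mem (S.smul_of_tower_mem _ h1) hu) hp)
  rw [map_add, LinearMap.map_smul_of_tower, Complex.add_im, Complex.smul_im, ← h₁.2,
    smul_zero, zero_add] at h₂
  exact h₂.2.symm

theorem isHermitian_of_trace_conjTranspose_mul_nonneg {S : Submodule ℂ (Matrix m m ℂ)}
    (h1 : 1 ∈ S) (hstar : ∀ a ∈ S, aᴴ ∈ S) {s : Matrix m m ℂ} (hs : s ∈ S)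
    (hpos : ∀ a ∈ S, a.PosSemidef → 0 ≤ trace (sᴴ * a)) : s.IsHermitian :=
  isHermitian_of_im_trace_conjTranspose_mul_eq_zero hstar hs fun _ hu huh =>
    huh.im_map_eq_zero_of_nonneg h1 (f := traceLinearMap m ℂ ℂ ∘ₗ LinearMap.mulLeft ℂ sᴴ) hpos hu

theorem posSemidef_smul_one_sub_of_re_trace_mul_le {a : Matrix m m ℂ} (ha : a.IsHermitian)
    {u : ℝ} (h : ∀ ρ ∈ densityMatrices m, (trace (a * ρ)).re ≤ u) : (u • 1 - a).PosSemidef := by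
  have hherm : (u • 1 - a).IsHermitian := by
    simp [IsHermitian, conjTranspose_sub, conjTranspose_smul, ha.eq]
  refine PosSemidef.of_dotProduct_mulVec_nonneg hherm fun x => ?_
  refine RCLike.nonneg_iff.mpr ⟨?_, hherm.im_star_dotProduct_mulVec_self x⟩
  obtain ⟨r, hr, hrx⟩ : ∃ r : ℝ, 0 ≤ r ∧ (r : ℂ) = star x ⬝ᵥ x :=
    RCLike.nonneg_iff_exists_ofReal.mp (dotProduct_star_self_nonneg x)
  rcases hr.eq_or_lt with rfl | hr
  · obtain rfl : x = 0 := dotProduct_star_self_eq_zero.mp (by simpa using hrx.symm)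
    simp
  -- test `h` on the pure state `x xᴴ / ‖x‖²`
  have hρ : r⁻¹ • vecMulVec x (star x) ∈ densityMatrices m := by
    refine ⟨(posSemidef_vecMulVec_self_star x).smul (inv_nonneg.mpr hr.le), ?_⟩
    rw [trace_smul, trace_vecMulVec, dotProduct_comm, ← hrx, Complex.real_smul,
      ← Complex.ofReal_mul, inv_mul_cancel₀ hr.ne', Complex.ofReal_one]
  have hax := h _ hρ
  rw [Matrix.mul_smul, trace_smul, trace_mul_comm, trace_vecMulVec_mul, Complex.real_smul,
    Complex.re_ofReal_mul, inv_mul_le_iff₀ hr] at hax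
  rw [sub_mulVec, smul_mulVec, one_mulVec, dotProduct_sub, dotProduct_smul, ← hrx]
  simp only [map_sub, RCLike.re_to_complex, Complex.real_smul, ← Complex.ofReal_mul,
    Complex.ofReal_re]
  linarith

theorem exists_mem_densityMatrices_re_trace_mul_eq {S : Submodule ℂ (Matrix m m ℂ)}
    (h1 : 1 ∈ S) {s : Matrix m m ℂ} (hs : s ∈ S) (hsh : s.IsHermitian)
    (hpos : ∀ a ∈ S, a.PosSemidef → 0 ≤ trace (s * a)) (htr : trace s = 1) :
    ∃ ρ ∈ densityMatrices m, ∀ u ∈ S, u.IsHermitian →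
      (trace (u * ρ)).re = (trace (u * s)).re := by
  let W : Submodule ℝ (EuclideanSpace ℂ (m × m)) :=
    (S.restrictScalars ℝ ⊓ selfAdjoint.submodule ℝ (Matrix m m ℂ)).map
      (toHilbertSchmidt m).toLinearMap
  have hW : ∀ u, toHilbertSchmidt m u ∈ W ↔ u ∈ S ∧ u.IsHermitian := fun u => by
    rw [Submodule.mem_map_equiv, LinearEquiv.symm_apply_apply]
    exact Iff.rfl
  have hsep : ∀ a ∈ W, ∀ u : ℝ, (∀ k ∈ toHilbertSchmidt m '' densityMatrices m, ⟪a, k⟫ ≤ u) →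
      ⟪a, toHilbertSchmidt m s⟫ ≤ u := by
    rintro _ ⟨a, ⟨haS, hah : a.IsHermitian⟩, rfl⟩ u hu
    have hsub := posSemidef_smul_one_sub_of_re_trace_mul_le hah fun ρ hρ => by
      simpa [inner_toHilbertSchmidt, hah.eq] using hu _ ⟨ρ, hρ, rfl⟩
    have := (Complex.nonneg_iff.mp (hpos _ (S.sub_mem (S.smul_of_tower_mem u h1) haS) hsub)).1
    rw [mul_sub, trace_sub, Matrix.mul_smul, mul_one, trace_smul, htr] at this
    simp only [LinearEquiv.coe_coe, inner_toHilbertSchmidt, hah.eq, trace_mul_comm a]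
    simpa only [Complex.real_smul, mul_one, Complex.sub_re, Complex.ofReal_re, sub_nonneg]
      using this
  obtain ⟨_, ⟨ρ, hρ, rfl⟩, hρs⟩ := W.exists_sub_mem_orthogonal_of_forall_inner_le
    (convex_densityMatrices.linear_image (toHilbertSchmidt m).toLinearMap)
    isCompact_image_toHilbertSchmidt_densityMatrices ((hW s).mpr ⟨hs, hsh⟩) hsep
  refine ⟨ρ, hρ, fun u hu huh => ?_⟩
  have := (Submodule.mem_orthogonal W _).mp hρs _ ((hW u).mpr ⟨hu, huh⟩)
  rw [LinearEquiv.coe_coe, ← map_sub, inner_toHilbertSchmidt, huh.eq, mul_sub, trace_sub,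
    Complex.sub_re] at this
  linarith

end Matrix

theorem stmt12_general {n : ℕ} (S : Submodule ℂ (Matrix (Fin n) (Fin n) ℂ))
    (h1 : (1 : Matrix (Fin n) (Fin n) ℂ) ∈ S)
    (hstar : ∀ a ∈ S, aᴴ ∈ S)
    (π : Matrix (Fin n) (Fin n) ℂ → Matrix (Fin n) (Fin n) ℂ)
    (hπmem : ∀ a : Matrix (Fin n) (Fin n) ℂ, a.IsHermitian → π a ∈ S ∧ (π a).IsHermitian)
    (hπorth : ∀ a : Matrix (Fin n) (Fin n) ℂ, a.IsHermitian →
      ∀ s ∈ S, s.IsHermitian → Matrix.trace ((a - π a) * s) = 0) :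
    {s : Matrix (Fin n) (Fin n) ℂ | s ∈ S ∧
        (∀ a ∈ S, a.PosSemidef → 0 ≤ Matrix.trace (sᴴ * a)) ∧
        Matrix.trace (sᴴ * 1) = 1}
      = π '' {ρ : Matrix (Fin n) (Fin n) ℂ | ρ.PosSemidef ∧ Matrix.trace ρ = 1} := by
  have hπtrace : ∀ ρ, ρ.IsHermitian → ∀ u ∈ S, u.IsHermitian →
      trace (π ρ * u) = trace (ρ * u) := fun ρ hρ u hu huh => by
    rw [eq_comm, ← sub_eq_zero, ← trace_sub, ← sub_mul, hπorth ρ hρ u hu huh]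
  ext s
  constructor
  · rintro ⟨hs, hpos, htr⟩
    have hsh := isHermitian_of_trace_conjTranspose_mul_nonneg h1 hstar hs hpos
    rw [hsh.eq, mul_one] at htr
    rw [hsh.eq] at hpos
    obtain ⟨ρ, hρ, hρs⟩ := exists_mem_densityMatrices_re_trace_mul_eq h1 hs hsh hpos htr
    refine ⟨ρ, hρ, eq_of_forall_re_trace_mul_eq (hπmem ρ hρ.1.1).1 (hπmem ρ hρ.1.1).2 hs hsh
      fun u hu huh => ?_⟩
    rw [trace_mul_comm, hπtrace ρ hρ.1.1 u hu huh, trace_mul_comm, hρs u hu huh]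
  · rintro ⟨ρ, ⟨hρ, hρ1⟩, rfl⟩
    obtain ⟨hπS, hπh⟩ := hπmem ρ hρ.1
    refine ⟨hπS, fun a ha hapsd => ?_, ?_⟩
    · rw [hπh.eq, hπtrace ρ hρ.1 a ha hapsd.1]
      exact hρ.trace_mul_nonneg hapsd
    · rw [hπh.eq, hπtrace ρ hρ.1 1 h1 isHermitian_one, mul_one, hρ1]

/-- for an operator system `S ⊆ M_n(ℂ)` and the orthogonal projection `π`
(w.r.t. the Hilbert–Schmidt inner product) of hermitian matrices onto the hermitian part of
`S`, the state space `M(S) = {s ∈ S | a ↦ tr(sᴴ a) is positive on psd elements of S and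
takes value 1 at 𝟙}` equals the image under `π` of the set of density matrices. -/
theorem stmt12 {n : ℕ} (hn : 0 < n) (S : Submodule ℂ (Matrix (Fin n) (Fin n) ℂ))
    (h1 : (1 : Matrix (Fin n) (Fin n) ℂ) ∈ S)
    (hstar : ∀ a ∈ S, aᴴ ∈ S)
    (π : Matrix (Fin n) (Fin n) ℂ → Matrix (Fin n) (Fin n) ℂ)
    (hπmem : ∀ a : Matrix (Fin n) (Fin n) ℂ, a.IsHermitian → π a ∈ S ∧ (π a).IsHermitian)
    (hπorth : ∀ a : Matrix (Fin n) (Fin n) ℂ, a.IsHermitian →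
      ∀ s ∈ S, s.IsHermitian → Matrix.trace ((a - π a) * s) = 0) :
    {s : Matrix (Fin n) (Fin n) ℂ | s ∈ S ∧
        (∀ a ∈ S, a.PosSemidef → 0 ≤ Matrix.trace (sᴴ * a)) ∧
        Matrix.trace (sᴴ * 1) = 1}
      = π '' {ρ : Matrix (Fin n) (Fin n) ℂ | ρ.PosSemidef ∧ Matrix.trace ρ = 1} :=
  stmt12_general S h1 hstar π hπmem hπorth
end

section
/- The set of density matrices M_n (translated by −𝟙/n to contain the origin in its relative interior) has no non-exposed faces: every face of M_n is an exposed face. -/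
open ComplexOrder

/-- An exposed face of a set `C` of complex matrices (w.r.t. the real linear structure):
either `∅` or the set of maximizers over `C` of a real linear functional. -/
def MatIsExposedFace {n : ℕ} (C F : Set (Matrix (Fin n) (Fin n) ℂ)) : Prop :=
  F = ∅ ∨ ∃ l : Matrix (Fin n) (Fin n) ℂ →ₗ[ℝ] ℝ, F = {x ∈ C | ∀ y ∈ C, l y ≤ l x}

/-!
Let `F` be a nonempty face and pick `ρ ∈ F` whose kernel is minimal. The kernel of a midpoint of
two positive semidefinite matrices is the intersection of their kernels, so `ker ρ ⊆ ker x` for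
every `x ∈ F`. Let `q` be the projection onto `ker ρ`. The functional `x ↦ Re tr (x q)` is
nonnegative on density matrices and vanishes exactly when `x q = 0`, hence on all of `F`.
Conversely, if `x q = 0` then `x ≤ 1 - q ≤ ε⁻¹ ρ`, so `ρ + ε (ρ - x)` is again a density matrix;
then `ρ` lies in an open segment starting at `x`, which forces `x ∈ F`.
-/

open Matrix
open scoped MatrixOrder

theorem Set.Finite.exists_pos_forall_le {s : Set ℝ} (hs : s.Finite) (hpos : ∀ t ∈ s, 0 < t) :
    ∃ ε, 0 < ε ∧ ∀ t ∈ s, ε ≤ t := by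
  classical
  refine ⟨(insert 1 hs.toFinset).min' (Finset.insert_nonempty _ _), ?_,
    fun t ht ↦ Finset.min'_le _ _ (by simp [ht])⟩
  rw [Finset.lt_min'_iff]
  simpa using hpos

theorem IsExtreme.mem_of_add_smul_sub_mem {𝕜 E : Type*} [Field 𝕜] [LinearOrder 𝕜]
    [IsStrictOrderedRing 𝕜] [AddCommGroup E] [Module 𝕜 E] {C F : Set E} (hF : IsExtreme 𝕜 C F)
    {x y : E} (hx : x ∈ C) (hy : y ∈ F) {s : 𝕜} (hs : 0 < s) (h : y + s • (y - x) ∈ C) :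
    x ∈ F := by
  have hs1 : 0 < 1 + s := by linarith
  refine hF.left_mem_of_mem_openSegment hx h hy
    ⟨s / (1 + s), 1 / (1 + s), by positivity, by positivity, by field_simp; ring, ?_⟩
  match_scalars
  · field_simp; ring
  · field_simp

theorem eq_setOf_forall_le_neg_of_nonneg {𝕜 E : Type*} [Field 𝕜] [LinearOrder 𝕜]
    [IsOrderedRing 𝕜] [AddCommGroup E] [Module 𝕜 E] {C F : Set E} (f : E →ₗ[𝕜] 𝕜)
    (hf : ∀ x ∈ C, 0 ≤ f x) (hFC : F ⊆ C) (hF : ∀ x ∈ C, x ∈ F ↔ f x = 0)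
    (hF_ne : F.Nonempty) : F = {x ∈ C | ∀ y ∈ C, (-f) y ≤ (-f) x} := by
  obtain ⟨z, hz⟩ := hF_ne
  ext x
  refine ⟨fun hx ↦ ⟨hFC hx, fun y hy ↦ ?_⟩, fun ⟨hx, hmax⟩ ↦ (hF x hx).mpr ?_⟩
  · simpa [(hF x (hFC hx)).mp hx] using hf y hy
  · exact le_antisymm (by simpa [(hF z (hFC hz)).mp hz] using hmax z (hFC hz)) (hf x hx)

theorem le_one_sub_of_mul_eq_zero {R : Type*} [Ring R] [PartialOrder R] [StarRing R]
    [StarOrderedRing R] {x q : R} (hx1 : x ≤ 1) (hx : IsSelfAdjoint x) (hq : IsSelfAdjoint q)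
    (hqq : IsIdempotentElem q) (hxq : x * q = 0) : x ≤ 1 - q := by
  have hqx : q * x = 0 := by simpa [hx.star_eq, hq.star_eq] using congrArg star hxq
  calc x = star (1 - q) * x * (1 - q) := by
        simp only [star_sub, star_one, hq.star_eq, sub_mul, mul_sub, one_mul, mul_one, hqx, hxq]
        noncomm_ring
    _ ≤ star (1 - q) * 1 * (1 - q) := star_left_conjugate_le_conjugate hx1 _
    _ = 1 - q := by simp only [star_sub, star_one, hq.star_eq, mul_one, hqq.one_sub.eq]

namespace Matrix

variable {ι 𝕜 : Type*} [Fintype ι] [DecidableEq ι] [RCLike 𝕜]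

theorem PosSemidef.ker_add {A B : Matrix ι ι 𝕜} (hA : A.PosSemidef) (hB : B.PosSemidef) :
    LinearMap.ker (toLin' (A + B)) = LinearMap.ker (toLin' A) ⊓ LinearMap.ker (toLin' B) := by
  ext v
  simp only [Submodule.mem_inf, LinearMap.mem_ker, toLin'_apply, add_mulVec]
  refine ⟨fun h ↦ ?_, fun ⟨hAv, hBv⟩ ↦ by rw [hAv, hBv, add_zero]⟩
  have hsum : star v ⬝ᵥ A *ᵥ v + star v ⬝ᵥ B *ᵥ v = 0 := by
    rw [← dotProduct_add, h, dotProduct_zero]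
  obtain ⟨hAv, hBv⟩ := (add_eq_zero_iff_of_nonneg (hA.dotProduct_mulVec_nonneg v)
    (hB.dotProduct_mulVec_nonneg v)).mp hsum
  exact ⟨(hA.dotProduct_mulVec_zero_iff v).mp hAv, (hB.dotProduct_mulVec_zero_iff v).mp hBv⟩

theorem ker_toLin'_smul (A : Matrix ι ι 𝕜) {c : ℝ} (hc : c ≠ 0) :
    LinearMap.ker (toLin' (c • A)) = LinearMap.ker (toLin' A) := by
  ext v
  simp [smul_mulVec, hc]

theorem _root_.Convex.exists_mem_ker_toLin'_le {F : Set (Matrix ι ι 𝕜)} (hF : Convex ℝ F)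
    (hF_psd : ∀ x ∈ F, x.PosSemidef) (hF_ne : F.Nonempty) :
    ∃ ρ ∈ F, ∀ x ∈ F, LinearMap.ker (toLin' ρ) ≤ LinearMap.ker (toLin' x) := by
  obtain ⟨_, ⟨ρ, hρF, rfl⟩, hmin⟩ :=
    wellFounded_lt.has_min ((fun x ↦ LinearMap.ker (toLin' x)) '' F) (hF_ne.image _)
  refine ⟨ρ, hρF, fun x hxF ↦ ?_⟩
  have hhalf : (1 / 2 : ℝ) ≠ 0 := by norm_num
  have hσF : (1 / 2 : ℝ) • ρ + (1 / 2 : ℝ) • x ∈ F :=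
    hF hρF hxF (by norm_num) (by norm_num) (by norm_num)
  have hσ : LinearMap.ker (toLin' ((1 / 2 : ℝ) • ρ + (1 / 2 : ℝ) • x)) =
      LinearMap.ker (toLin' ρ) ⊓ LinearMap.ker (toLin' x) := by
    rw [((hF_psd ρ hρF).smul (by norm_num)).ker_add ((hF_psd x hxF).smul (by norm_num)),
      ker_toLin'_smul _ hhalf, ker_toLin'_smul _ hhalf]
  have hnlt : ¬LinearMap.ker (toLin' ρ) ⊓ LinearMap.ker (toLin' x) < LinearMap.ker (toLin' ρ) := by
    rw [← hσ]
    exact hmin _ ⟨_, hσF, rfl⟩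
  exact inf_eq_left.mp (eq_of_le_of_not_lt inf_le_left hnlt)

theorem mul_eq_zero_of_ker_toLin'_le {A B C : Matrix ι ι 𝕜}
    (hAB : LinearMap.ker (toLin' A) ≤ LinearMap.ker (toLin' B)) (hAC : A * C = 0) : B * C = 0 := by
  rw [← toLin'.injective.eq_iff, toLin'_mul, map_zero, ← LinearMap.range_le_ker_iff] at hAC ⊢
  exact hAC.trans hAB

theorem PosSemidef.trace_mul_eq_trace_conjTranspose_mul_self {A B : Matrix ι ι 𝕜}
    (hA : A.PosSemidef) (hB : B.PosSemidef) :
    (A * B).trace = ((CFC.sqrt A * CFC.sqrt B)ᴴ * (CFC.sqrt A * CFC.sqrt B)).trace := by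
  have hsA : (CFC.sqrt A)ᴴ = CFC.sqrt A := (CFC.sqrt_nonneg A).posSemidef.isHermitian.eq
  have hsB : (CFC.sqrt B)ᴴ = CFC.sqrt B := (CFC.sqrt_nonneg B).posSemidef.isHermitian.eq
  conv_lhs => rw [← CFC.sqrt_mul_sqrt_self A hA.nonneg, ← CFC.sqrt_mul_sqrt_self B hB.nonneg]
  simp only [conjTranspose_mul, hsA, hsB, mul_assoc]
  rw [trace_mul_comm (CFC.sqrt B)]
  simp only [mul_assoc]

theorem PosSemidef.trace_mul_nonneg_s14 {A B : Matrix ι ι 𝕜} (hA : A.PosSemidef)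
    (hB : B.PosSemidef) : 0 ≤ (A * B).trace := by
  rw [hA.trace_mul_eq_trace_conjTranspose_mul_self hB]
  exact (posSemidef_conjTranspose_mul_self _).trace_nonneg

theorem PosSemidef.trace_mul_eq_zero_iff {A B : Matrix ι ι 𝕜} (hA : A.PosSemidef)
    (hB : B.PosSemidef) : (A * B).trace = 0 ↔ A * B = 0 := by
  refine ⟨fun h ↦ ?_, fun h ↦ by rw [h, trace_zero]⟩
  rw [hA.trace_mul_eq_trace_conjTranspose_mul_self hB,
    trace_conjTranspose_mul_self_eq_zero_iff] at h
  rw [← CFC.sqrt_mul_sqrt_self A hA.nonneg, ← CFC.sqrt_mul_sqrt_self B hB.nonneg, mul_assoc,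
    ← mul_assoc (CFC.sqrt A) (CFC.sqrt B), h, zero_mul, mul_zero]

theorem PosSemidef.re_trace_mul_nonneg {A B : Matrix ι ι 𝕜} (hA : A.PosSemidef)
    (hB : B.PosSemidef) : 0 ≤ RCLike.re (A * B).trace :=
  (RCLike.nonneg_iff.mp (hA.trace_mul_nonneg_s14 hB)).1

theorem PosSemidef.re_trace_mul_eq_zero_iff {A B : Matrix ι ι 𝕜} (hA : A.PosSemidef)
    (hB : B.PosSemidef) : RCLike.re (A * B).trace = 0 ↔ A * B = 0 := by
  simp [← hA.trace_mul_eq_zero_iff hB, RCLike.ext_iff (z := (A * B).trace),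
    (RCLike.nonneg_iff.mp (hA.trace_mul_nonneg_s14 hB)).2]

noncomputable def kerProj (A : Matrix ι ι 𝕜) : Matrix ι ι 𝕜 :=
  cfc (fun t : ℝ ↦ if t = 0 then 1 else 0) A

theorem kerProj_posSemidef (A : Matrix ι ι 𝕜) : A.kerProj.PosSemidef :=
  nonneg_iff_posSemidef.mp <| cfc_nonneg fun t _ ↦ by split_ifs <;> norm_num

theorem isIdempotentElem_kerProj (A : Matrix ι ι 𝕜) : IsIdempotentElem A.kerProj := by
  have hc := A.finite_real_spectrum.continuousOn (fun t : ℝ ↦ if t = 0 then (1 : ℝ) else 0)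
  rw [IsIdempotentElem, kerProj, ← cfc_mul _ _ A hc hc]
  exact cfc_congr fun t _ ↦ by split_ifs <;> norm_num

theorem IsHermitian.mul_kerProj {A : Matrix ι ι 𝕜} (hA : A.IsHermitian) : A * A.kerProj = 0 := by
  have hc := A.finite_real_spectrum.continuousOn (fun t : ℝ ↦ if t = 0 then (1 : ℝ) else 0)
  nth_rw 1 [kerProj, ← cfc_id' ℝ A hA.isSelfAdjoint, ← cfc_mul _ _ A (by fun_prop) hc]
  rw [← cfc_zero ℝ A]
  exact cfc_congr fun t _ ↦ by split_ifs with h <;> simp [h]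

theorem PosSemidef.exists_smul_one_sub_kerProj_le {A : Matrix ι ι 𝕜} (hA : A.PosSemidef) :
    ∃ ε : ℝ, 0 < ε ∧ ε • (1 - A.kerProj) ≤ A := by
  obtain ⟨ε, hε, hεle⟩ := (A.finite_real_spectrum.sdiff (t := {0})).exists_pos_forall_le
    fun t ⟨ht, ht0⟩ ↦ (spectrum_nonneg_of_nonneg hA.nonneg ht).lt_of_ne (Ne.symm ht0)
  refine ⟨ε, hε, ?_⟩
  have hc := A.finite_real_spectrum.continuousOn (fun t : ℝ ↦ if t = 0 then (1 : ℝ) else 0)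
  conv_rhs => rw [← cfc_id' ℝ A hA.isHermitian.isSelfAdjoint]
  rw [kerProj, ← cfc_const_one ℝ A, ← cfc_sub _ _ A (by fun_prop) hc, ← cfc_const_mul _ _ A,
    cfc_le_iff _ _ A]
  intro t ht
  by_cases ht0 : t = 0
  · simp [ht0]
  · simpa [ht0] using hεle t ⟨ht, ht0⟩

end Matrix

section DensityMatrices

variable {ι 𝕜 : Type*} [Fintype ι] [RCLike 𝕜]

variable (ι 𝕜) in
def densityMatrices : Set (Matrix ι ι 𝕜) := {ρ | ρ.PosSemidef ∧ ρ.trace = 1}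

theorem le_one_of_mem_densityMatrices [DecidableEq ι] {ρ : Matrix ι ι 𝕜}
    (hρ : ρ ∈ densityMatrices ι 𝕜) : ρ ≤ 1 := by
  have hH := hρ.1.isHermitian
  rw [CFC.le_one_iff (R := ℝ) ρ hH.isSelfAdjoint, hH.spectrum_real_eq_range_eigenvalues]
  rintro _ ⟨i, rfl⟩
  have hsum : ∑ j, hH.eigenvalues j = 1 := by
    have := hH.trace_eq_sum_eigenvalues
    rw [hρ.2] at this
    exact_mod_cast this.symm
  rw [← hsum]
  exact Finset.single_le_sum (fun j _ ↦ hρ.1.eigenvalues_nonneg j) (Finset.mem_univ i)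

theorem IsExtreme.mem_of_smul_le {F : Set (Matrix ι ι 𝕜)}
    (hF : IsExtreme ℝ (densityMatrices ι 𝕜) F) {ρ x : Matrix ι ι 𝕜} (hρ : ρ ∈ F)
    (hx : x ∈ densityMatrices ι 𝕜) {ε : ℝ} (hε : 0 < ε) (hle : ε • x ≤ ρ) : x ∈ F := by
  obtain ⟨hρ_psd, hρ_tr⟩ := hF.subset hρ
  refine hF.mem_of_add_smul_sub_mem hx hρ hε ⟨?_, ?_⟩
  · rw [show ρ + ε • (ρ - x) = ε • ρ + (ρ - ε • x) by module]
    exact (hρ_psd.smul hε.le).add hle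
  · simp [trace_sub, hρ_tr, hx.2]

end DensityMatrices

/-- the set of `n × n` density matrices has no non-exposed faces:
every face (convex extreme subset) is an exposed face. -/
theorem stmt14 {n : ℕ}
    (M : Set (Matrix (Fin n) (Fin n) ℂ))
    (hM : M = {ρ : Matrix (Fin n) (Fin n) ℂ | ρ.PosSemidef ∧ ρ.trace = 1}) :
    ∀ F : Set (Matrix (Fin n) (Fin n) ℂ),
      Convex ℝ F → IsExtreme ℝ M F → MatIsExposedFace M F := by
  rintro F hF_conv hF
  change M = densityMatrices (Fin n) ℂ at hM
  subst hM
  rcases F.eq_empty_or_nonempty with hF_empty | hF_ne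
  · exact Or.inl hF_empty
  obtain ⟨ρ, hρF, hker⟩ := hF_conv.exists_mem_ker_toLin'_le (fun x hx ↦ (hF.subset hx).1) hF_ne
  have hρ := (hF.subset hρF).1
  obtain ⟨ε, hε, hερ⟩ := hρ.exists_smul_one_sub_kerProj_le
  have hq := kerProj_posSemidef ρ
  let f := RCLike.reLm.comp ((traceLinearMap _ ℝ ℂ).comp (LinearMap.mulRight ℝ ρ.kerProj))
  refine Or.inr ⟨-f, eq_setOf_forall_le_neg_of_nonneg f (fun x hx ↦ hx.1.re_trace_mul_nonneg hq)
    hF.subset (fun x hx ↦ ?_) hF_ne⟩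
  change x ∈ F ↔ RCLike.re (x * ρ.kerProj).trace = 0
  rw [hx.1.re_trace_mul_eq_zero_iff hq]
  refine ⟨fun hxF ↦ mul_eq_zero_of_ker_toLin'_le (hker x hxF) hρ.isHermitian.mul_kerProj,
    fun hxq ↦ hF.mem_of_smul_le hρF hx hε (le_trans ?_ hερ)⟩
  exact smul_le_smul_of_nonneg_left (le_one_sub_of_mul_eq_zero (le_one_of_mem_densityMatrices hx)
    hx.1.isHermitian.isSelfAdjoint hq.isHermitian.isSelfAdjoint (isIdempotentElem_kerProj ρ) hxq)
    hε.le
end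

section
/- Let C ⊆ ℝ^m be a convex set with nonempty interior, let F be a proper exposed face of C, and suppose the normal cone N = N_C(F) has dimension d and possesses d linearly independent exposed rays each of which is the normal cone of C at some point of C. Then there exist d mutually distinct coatoms of the lattice of exposed faces of C whose intersection is F. -/
/-- The ray generated by a vector `u`. -/
def rayOf {m : ℕ} (u : EuclideanSpace ℝ (Fin m)) : Set (EuclideanSpace ℝ (Fin m)) :=
  {v | ∃ a : ℝ, 0 ≤ a ∧ v = a • u}

open RealInnerProductSpace Topology Filter

/-!
Each `f i` spans the whole normal cone at some point `y i ∈ C`, so the face exposed by `f i` is a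
coatom: a larger exposed face contains `y i`, hence is exposed by a normal vector at `y i`, i.e. by
a nonnegative multiple of `f i`. These faces contain `F`, since a normal vector at a relative
interior point of `F` is normal along all of `F`. Conversely `F` is exposed by some `u ∈ N`, and the
`f i` span `N` by the dimension count, so a point of `C` maximizing every `f i` also maximizes `u`.
-/

section IntrinsicInterior

variable {E : Type*} [NormedAddCommGroup E] [NormedSpace ℝ E]

theorem exists_pos_smul_sub_add_mem_of_mem_intrinsicInterior {s : Set E} {x₀ x : E}
    (hx₀ : x₀ ∈ intrinsicInterior ℝ s) (hx : x ∈ s) : ∃ t : ℝ, 0 < t ∧ t • (x₀ - x) + x₀ ∈ s := by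
  obtain ⟨y, hy, rfl⟩ := mem_intrinsicInterior.mp hx₀
  let g : ℝ → affineSpan ℝ s := fun t =>
    ⟨t • ((y : E) - x) + y,
      (affineSpan ℝ s).smul_vsub_vadd_mem t y.2 (subset_affineSpan ℝ s hx) y.2⟩
  have hg : Continuous g := by fun_prop
  have hnhds : ∀ᶠ t in 𝓝 0, g t ∈ (↑) ⁻¹' s :=
    hg.continuousAt.preimage_mem_nhds (by simpa [g] using mem_interior_iff_mem_nhds.mp hy)
  obtain ⟨t, hts, ht⟩ :=
    ((hnhds.filter_mono nhdsWithin_le_nhds).and (self_mem_nhdsWithin (s := Set.Ioi 0))).exists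
  exact ⟨t, ht, hts⟩

theorem LinearMap.eq_of_isMaxOn_of_mem_intrinsicInterior (l : E →ₗ[ℝ] ℝ) {s : Set E}
    {x₀ x : E} (hmax : IsMaxOn l s x₀) (hx₀ : x₀ ∈ intrinsicInterior ℝ s) (hx : x ∈ s) :
    l x = l x₀ := by
  obtain ⟨t, ht, hts⟩ := exists_pos_smul_sub_add_mem_of_mem_intrinsicInterior hx₀ hx
  have hle : l (t • (x₀ - x) + x₀) ≤ l x₀ := hmax hts
  simp only [map_add, map_smul, map_sub, smul_eq_mul] at hle
  have hle' : l x ≤ l x₀ := hmax hx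
  nlinarith

end IntrinsicInterior

section ExposedFaces

variable {𝕜 E : Type*} [AddCommMonoid E] [TopologicalSpace E] {A : Set E}

@[simp]
theorem ContinuousLinearMap.toExposed_zero [TopologicalSpace 𝕜] [Ring 𝕜] [PartialOrder 𝕜]
    [Module 𝕜 E] : (0 : StrongDual 𝕜 E).toExposed A = A := by
  ext; simp [ContinuousLinearMap.toExposed]

theorem ContinuousLinearMap.toExposed_smul [Field 𝕜] [LinearOrder 𝕜] [IsStrictOrderedRing 𝕜]
    [TopologicalSpace 𝕜] [IsTopologicalRing 𝕜] [Module 𝕜 E] (l : StrongDual 𝕜 E) {a : 𝕜}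
    (ha : 0 < a) : (a • l).toExposed A = l.toExposed A := by
  ext; simp [ContinuousLinearMap.toExposed, mul_le_mul_iff_right₀ ha]

end ExposedFaces

section InnerProductSpace

variable {E : Type*} [NormedAddCommGroup E] [InnerProductSpace ℝ E] {A B : Set E}

theorem mem_toExposed_innerSL_iff {u x : E} :
    x ∈ (innerSL ℝ u).toExposed A ↔ x ∈ A ∧ ∀ y ∈ A, ⟪u, y⟫ ≤ ⟪u, x⟫ := by
  simp [ContinuousLinearMap.toExposed]

theorem IsExposed.exists_eq_toExposed_innerSL [CompleteSpace E] (hB : IsExposed ℝ A B)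
    (hne : B.Nonempty) : ∃ u : E, B = (innerSL ℝ u).toExposed A := by
  obtain ⟨l, rfl⟩ := hB hne
  refine ⟨(InnerProductSpace.toDual ℝ E).symm l, ?_⟩
  congr
  ext
  simp [InnerProductSpace.toDual_symm_apply]

theorem toExposed_innerSL_ne_of_interior_nonempty (hA : (interior A).Nonempty) {u : E}
    (hu : u ≠ 0) : (innerSL ℝ u).toExposed A ≠ A := by
  intro h
  obtain ⟨z, hz⟩ := hA
  have hzA : z ∈ (innerSL ℝ u).toExposed A := h.symm ▸ interior_subset hz
  have hmax : IsLocalMax (innerSL ℝ u) z :=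
    Filter.mem_of_superset (mem_interior_iff_mem_nhds.mp hz) fun y hy => hzA.2 y hy
  have h0 := hmax.hasFDerivAt_eq_zero (innerSL ℝ u).hasFDerivAt
  exact hu (by simpa using DFunLike.congr_fun h0 u)

theorem mem_toExposed_innerSL_of_mem_span {ι : Type*} [Nonempty ι] {f : ι → E} {u x₀ x : E}
    (hu : u ∈ Submodule.span ℝ (Set.range f)) (hx₀u : x₀ ∈ (innerSL ℝ u).toExposed A)
    (hx₀ : ∀ i, x₀ ∈ (innerSL ℝ (f i)).toExposed A)
    (hx : ∀ i, x ∈ (innerSL ℝ (f i)).toExposed A) : x ∈ (innerSL ℝ u).toExposed A := by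
  simp only [mem_toExposed_innerSL_iff] at *
  have hxA : x ∈ A := (hx (Classical.arbitrary ι)).1
  have hperp : Set.range f ⊆ (ℝ ∙ (x - x₀))ᗮ := by
    rintro _ ⟨i, rfl⟩
    rw [SetLike.mem_coe, Submodule.mem_orthogonal_singleton_iff_inner_left, inner_sub_right,
      sub_eq_zero]
    exact le_antisymm ((hx₀ i).2 x hxA) ((hx i).2 x₀ hx₀u.1)
  have hux : ⟪u, x - x₀⟫ = 0 :=
    Submodule.mem_orthogonal_singleton_iff_inner_left.mp (Submodule.span_le.mpr hperp hu)
  rw [inner_sub_right, sub_eq_zero] at hux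
  exact ⟨hxA, fun y hy => hux ▸ hx₀u.2 y hy⟩

end InnerProductSpace

theorem LinearIndependent.eq_of_mem_rayOf {m : ℕ} {ι : Type*} {f : ι → EuclideanSpace ℝ (Fin m)}
    (hf : LinearIndependent ℝ f) {i j : ι} (h : f i ∈ rayOf (f j)) : i = j := by
  by_contra hne
  obtain ⟨a, -, ha⟩ := h
  refine hf.notMem_span_image (s := {j}) (by simpa using hne) ?_
  rw [Set.image_singleton, ha]
  exact Submodule.smul_mem _ a (Submodule.mem_span_singleton_self _)

section NormalCone

variable {m : ℕ} {C : Set (EuclideanSpace ℝ (Fin m))}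

theorem self_mem_rayOf (u : EuclideanSpace ℝ (Fin m)) : u ∈ rayOf u :=
  ⟨1, zero_le_one, (one_smul ℝ u).symm⟩

theorem mem_normalCone_iff {u x : EuclideanSpace ℝ (Fin m)} :
    u ∈ normalCone C x ↔ ∀ y ∈ C, ⟪u, y⟫ ≤ ⟪u, x⟫ := by
  simp [normalCone, inner_sub_right]

theorem mem_toExposed_innerSL_iff_mem_normalCone {u x : EuclideanSpace ℝ (Fin m)} :
    x ∈ (innerSL ℝ u).toExposed C ↔ x ∈ C ∧ u ∈ normalCone C x := by
  rw [mem_toExposed_innerSL_iff, mem_normalCone_iff]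

theorem normalCone_subset_of_mem_intrinsicInterior {F : Set (EuclideanSpace ℝ (Fin m))}
    (hFC : F ⊆ C) {x₀ x : EuclideanSpace ℝ (Fin m)} (hx₀ : x₀ ∈ intrinsicInterior ℝ F)
    (hx : x ∈ F) : normalCone C x₀ ⊆ normalCone C x := by
  intro u hu
  rw [mem_normalCone_iff] at hu ⊢
  have hconst := (innerₛₗ ℝ u).eq_of_isMaxOn_of_mem_intrinsicInterior
    (fun y hy => hu y (hFC hy)) hx₀ hx
  simp only [innerₛₗ_apply_apply] at hconst
  exact hconst ▸ hu

theorem mem_toExposed_innerSL_of_normalCone_eq_rayOf {v y : EuclideanSpace ℝ (Fin m)}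
    (hy : y ∈ C) (hyv : normalCone C y = rayOf v) : y ∈ (innerSL ℝ v).toExposed C :=
  mem_toExposed_innerSL_iff_mem_normalCone.mpr ⟨hy, hyv ▸ self_mem_rayOf v⟩

theorem isCoatomExposedFace_toExposed_of_normalCone_eq_rayOf
    (hint : (interior C).Nonempty) {v y : EuclideanSpace ℝ (Fin m)} (hv : v ≠ 0) (hy : y ∈ C)
    (hyv : normalCone C y = rayOf v) : IsCoatomExposedFace C ((innerSL ℝ v).toExposed C) := by
  refine ⟨ContinuousLinearMap.toExposed.isExposed, toExposed_innerSL_ne_of_interior_nonempty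
    hint hv, fun G hG hsub => ?_⟩
  have hyG : y ∈ G := hsub (mem_toExposed_innerSL_of_normalCone_eq_rayOf hy hyv)
  obtain ⟨w, rfl⟩ := hG.exists_eq_toExposed_innerSL ⟨y, hyG⟩
  obtain ⟨a, ha, rfl⟩ : w ∈ rayOf v := hyv ▸ (mem_toExposed_innerSL_iff_mem_normalCone.mp hyG).2
  rw [map_smul]
  rcases ha.eq_or_lt with rfl | ha
  · simp
  · exact .inl ((innerSL ℝ v).toExposed_smul ha)

end NormalCone

theorem stmt17_general {m d : ℕ} (C : Set (EuclideanSpace ℝ (Fin m)))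
    (hint : (interior C).Nonempty)
    (F : Set (EuclideanSpace ℝ (Fin m))) (hF : IsExposed ℝ C F)
    (hFne : F ≠ ∅) (hFC : F ≠ C)
    (x₀ : EuclideanSpace ℝ (Fin m)) (hx₀ : x₀ ∈ intrinsicInterior ℝ F)
    (N : Set (EuclideanSpace ℝ (Fin m))) (hN : N = normalCone C x₀)
    (hdim : Module.finrank ℝ (Submodule.span ℝ N) = d)
    (f : Fin d → EuclideanSpace ℝ (Fin m)) (hlin : LinearIndependent ℝ f)
    (hrays : ∀ i, f i ≠ 0 ∧ IsExposed ℝ N (rayOf (f i)) ∧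
      ∃ y ∈ C, normalCone C y = rayOf (f i)) :
    ∃ G : Fin d → Set (EuclideanSpace ℝ (Fin m)),
      Function.Injective G ∧ (∀ i, IsCoatomExposedFace C (G i)) ∧ (⋂ i, G i) = F := by
  subst hN
  obtain ⟨u, rfl⟩ := hF.exists_eq_toExposed_innerSL (Set.nonempty_iff_ne_empty.mpr hFne)
  have hx₀F := intrinsicInterior_subset hx₀
  have hfN : ∀ i, f i ∈ normalCone C x₀ := fun i => (hrays i).2.1.subset (self_mem_rayOf (f i))
  have hspan : Submodule.span ℝ (Set.range f) = Submodule.span ℝ (normalCone C x₀) :=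
    Submodule.eq_of_le_of_finrank_le (Submodule.span_mono (Set.range_subset_iff.mpr hfN))
      (by rw [hdim, finrank_span_eq_card hlin, Fintype.card_fin])
  have hu : u ∈ Submodule.span ℝ (Set.range f) :=
    hspan ▸ Submodule.subset_span (mem_toExposed_innerSL_iff_mem_normalCone.mp hx₀F).2
  have hFG : ∀ i, (innerSL ℝ u).toExposed C ⊆ (innerSL ℝ (f i)).toExposed C := fun i x hx =>
    mem_toExposed_innerSL_iff_mem_normalCone.mpr ⟨hF.subset hx,
      normalCone_subset_of_mem_intrinsicInterior hF.subset hx₀ hx (hfN i)⟩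
  choose y hyC hyf using fun i => (hrays i).2.2
  refine ⟨fun i => (innerSL ℝ (f i)).toExposed C, fun i j hij => ?_,
    fun i => isCoatomExposedFace_toExposed_of_normalCone_eq_rayOf hint (hrays i).1 (hyC i) (hyf i),
    subset_antisymm ?_ (Set.subset_iInter hFG)⟩
  · have hyi : y j ∈ (innerSL ℝ (f i)).toExposed C :=
      (Set.ext_iff.mp hij (y j)).mpr (mem_toExposed_innerSL_of_normalCone_eq_rayOf (hyC j) (hyf j))
    exact hlin.eq_of_mem_rayOf (hyf j ▸ (mem_toExposed_innerSL_iff_mem_normalCone.mp hyi).2)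
  · rcases isEmpty_or_nonempty (Fin d) with hd | hd
    · have hu0 : u = 0 := by simpa [Set.range_eq_empty f] using hu
      simp [hu0] at hFC
    · intro x hx
      exact mem_toExposed_innerSL_of_mem_span hu hx₀F (fun i => hFG i hx₀F) (Set.mem_iInter.mp hx)

/-- let `F` be a proper exposed face of a convex set `C` with nonempty
interior, let `N = N_C(F)` (the normal cone at a relative interior point `x₀` of `F`) have
dimension `d`, and suppose `N` has `d` linearly independent exposed rays each of which is a
normal cone of `C` at some point.  Then there are `d` mutually distinct coatoms of the
exposed-face lattice of `C` whose intersection is `F`. -/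
theorem stmt17 {m d : ℕ} (C : Set (EuclideanSpace ℝ (Fin m))) (hC : Convex ℝ C)
    (hint : (interior C).Nonempty)
    (F : Set (EuclideanSpace ℝ (Fin m))) (hF : IsExposed ℝ C F)
    (hFne : F ≠ ∅) (hFC : F ≠ C)
    (x₀ : EuclideanSpace ℝ (Fin m)) (hx₀ : x₀ ∈ intrinsicInterior ℝ F)
    (N : Set (EuclideanSpace ℝ (Fin m))) (hN : N = normalCone C x₀)
    (hdim : Module.finrank ℝ (Submodule.span ℝ N) = d)
    (f : Fin d → EuclideanSpace ℝ (Fin m)) (hlin : LinearIndependent ℝ f)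
    (hrays : ∀ i, f i ≠ 0 ∧ IsExposed ℝ N (rayOf (f i)) ∧
      ∃ y ∈ C, normalCone C y = rayOf (f i)) :
    ∃ G : Fin d → Set (EuclideanSpace ℝ (Fin m)),
      Function.Injective G ∧ (∀ i, IsCoatomExposedFace C (G i)) ∧ (⋂ i, G i) = F :=
  stmt17_general C hint F hF hFne hFC x₀ hx₀ N hN hdim f hlin hrays
end

section
/- Let C ⊆ ℝ^m be a convex body with nonempty interior such that for every proper normal cone N of C, every nonempty face of N is a normal cone of C. Then the lattice of exposed faces of C is coatomistic: every exposed face of C is the intersection of the coatoms of the exposed-face lattice containing it. -/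
open scoped RealInnerProductSpace

theorem IsMaxOn.eq_of_mem_intrinsicInterior {E : Type*} [NormedAddCommGroup E] [NormedSpace ℝ E]
    {F : Set E} {ψ : E →ₗ[ℝ] ℝ} {z f : E} (hz : z ∈ intrinsicInterior ℝ F)
    (hmax : IsMaxOn ψ F z) (hf : f ∈ F) : ψ f = ψ z := by
  obtain ⟨z', hz', rfl⟩ := hz
  let γ : ℝ → affineSpan ℝ F := fun t =>
    ⟨AffineMap.lineMap (z' : E) f t, AffineMap.lineMap_mem t z'.2 (subset_affineSpan ℝ F hf)⟩
  have hγ : Continuous γ := AffineMap.lineMap_continuous.subtype_mk _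
  have hγ0 : γ 0 = z' := Subtype.ext (AffineMap.lineMap_apply_zero _ _)
  have hnear : ∀ᶠ t in nhds 0, γ t ∈ interior ((↑) ⁻¹' F : Set (affineSpan ℝ F)) :=
    hγ.continuousAt.preimage_mem_nhds (hγ0 ▸ isOpen_interior.mem_nhds hz')
  obtain ⟨t, ht, htF⟩ := hnear.exists_lt
  have hle : ψ (AffineMap.lineMap (z' : E) f t) ≤ ψ z' := hmax (interior_subset htF :)
  rw [AffineMap.lineMap_apply_module', map_add, map_smul, map_sub, smul_eq_mul] at hle
  exact le_antisymm (hmax hf) (by nlinarith)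

section Cone

variable {E : Type*} [AddCommGroup E] [Module ℝ E] {K : Set E} {φ : E →ₗ[ℝ] ℝ} {u v : E}

theorem inv_smul_mem_inter_preimage_one (hcone : ∀ u ∈ K, ∀ t : ℝ, 0 ≤ t → t • u ∈ K)
    (hφ : ∀ u ∈ K, u ≠ 0 → 0 < φ u) (hu : u ∈ K) (hu0 : u ≠ 0) :
    (φ u)⁻¹ • u ∈ K ∩ φ ⁻¹' {1} :=
  ⟨hcone u hu _ (inv_nonneg.2 (hφ u hu hu0).le), by
    simp [map_smul, smul_eq_mul, inv_mul_cancel₀ (hφ u hu hu0).ne']⟩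

theorem sameRay_of_sameRay_add_of_mem_extremePoints (hcone : ∀ u ∈ K, ∀ t : ℝ, 0 ≤ t → t • u ∈ K)
    (hφ : ∀ u ∈ K, u ≠ 0 → 0 < φ u) (hv : v ∈ (K ∩ φ ⁻¹' {1}).extremePoints ℝ)
    {u₁ u₂ : E} (hu₁ : u₁ ∈ K) (hu₂ : u₂ ∈ K) (h : SameRay ℝ v (u₁ + u₂)) : SameRay ℝ v u₁ := by
  obtain ⟨⟨-, hv1 : φ v = 1⟩, hvext⟩ := mem_extremePoints.1 hv
  have hv0 : v ≠ 0 := by rintro rfl; simp at hv1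
  rcases eq_or_ne u₁ 0 with rfl | hu₁0
  · exact SameRay.zero_right v
  rcases eq_or_ne u₂ 0 with rfl | hu₂0
  · simpa using h
  obtain ⟨t, -, htv⟩ := h.exists_nonneg_left hv0
  have hs₁ := hφ u₁ hu₁ hu₁0
  have hs₂ := hφ u₂ hu₂ hu₂0
  obtain rfl : t = φ u₁ + φ u₂ := by simpa [hv1] using congrArg φ htv
  have hseg : v ∈ openSegment ℝ ((φ u₁)⁻¹ • u₁) ((φ u₂)⁻¹ • u₂) := by
    refine ⟨φ u₁ / (φ u₁ + φ u₂), φ u₂ / (φ u₁ + φ u₂), by positivity, by positivity,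
      by field_simp, ?_⟩
    rw [smul_smul, smul_smul, ← div_eq_mul_inv, ← div_eq_mul_inv, div_div_cancel_left' hs₁.ne',
      div_div_cancel_left' hs₂.ne', ← smul_add, ← htv, inv_smul_smul₀ (by positivity)]
  have hu₁v := (hvext _ (inv_smul_mem_inter_preimage_one hcone hφ hu₁ hu₁0) _
    (inv_smul_mem_inter_preimage_one hcone hφ hu₂ hu₂0) hseg).1
  exact hu₁v ▸ SameRay.sameRay_nonneg_smul_left u₁ (inv_nonneg.2 hs₁.le)

theorem isExtreme_setOf_sameRay (hcone : ∀ u ∈ K, ∀ t : ℝ, 0 ≤ t → t • u ∈ K)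
    (hφ : ∀ u ∈ K, u ≠ 0 → 0 < φ u) (hv : v ∈ (K ∩ φ ⁻¹' {1}).extremePoints ℝ) :
    IsExtreme ℝ K {u | SameRay ℝ v u} := by
  have hv0 : v ≠ 0 := by rintro rfl; simpa using hv.1.2
  refine ⟨fun u hu => ?_, ?_⟩
  · obtain ⟨t, ht, rfl⟩ := SameRay.exists_nonneg_left hu hv0
    exact hcone v hv.1.1 t ht
  · rintro u₁ hu₁ u₂ hu₂ u hu ⟨a, b, ha, hb, -, rfl⟩
    simpa [inv_smul_smul₀ ha.ne'] using
      (sameRay_of_sameRay_add_of_mem_extremePoints hcone hφ hv (hcone _ hu₁ a ha.le)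
        (hcone _ hu₂ b hb.le) hu).pos_smul_right (inv_pos.2 ha)

theorem convex_setOf_sameRay (v : E) : Convex ℝ {u | SameRay ℝ v u} :=
  fun _ h₁ _ h₂ _ _ ha hb _ => (h₁.nonneg_smul_right ha).add_right (h₂.nonneg_smul_right hb)

end Cone

theorem isCompact_inter_preimage_one {E : Type*} [NormedAddCommGroup E] [NormedSpace ℝ E]
    [ProperSpace E] {K : Set E} {φ : E →L[ℝ] ℝ} {r : ℝ} (hK : IsClosed K) (hr : 0 < r)
    (hφ : ∀ u ∈ K, r * ‖u‖ ≤ φ u) : IsCompact (K ∩ φ ⁻¹' {1}) := by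
  refine Metric.isCompact_of_isClosed_isBounded
    (hK.inter (isClosed_singleton.preimage φ.continuous))
    ((Metric.isBounded_closedBall (x := 0) (r := r⁻¹)).subset fun u ⟨hu, hu1⟩ => ?_)
  rw [mem_closedBall_zero_iff, ← one_div, le_div_iff₀' hr]
  exact (hφ u hu).trans_eq hu1

theorem IsCompact.exists_mem_extremePoints_lt {E : Type*} [AddCommGroup E] [Module ℝ E]
    [TopologicalSpace E] [T2Space E] [IsTopologicalAddGroup E] [ContinuousSMul ℝ E]
    [LocallyConvexSpace ℝ E] {B : Set E} (hB : IsCompact B) (hBc : Convex ℝ B) (ψ : E →L[ℝ] ℝ)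
    {b : E} (hb : b ∈ B) {c : ℝ} (hψ : ψ b < c) : ∃ v ∈ B.extremePoints ℝ, ψ v < c := by
  by_contra! h
  have hsub : B ⊆ {x | c ≤ ψ x} := closure_convexHull_extremePoints hB hBc ▸
    closure_minimal (convexHull_min h (convex_halfSpace_ge ψ.isLinear c))
      (isClosed_le continuous_const ψ.continuous)
  exact (hψ.trans_le (hsub hb)).false

section NormalCone

variable {m : ℕ} {C F : Set (EuclideanSpace ℝ (Fin m))} {x y z z₀ u v : EuclideanSpace ℝ (Fin m)}

theorem normalCone_eq_biInter :
    normalCone C x = ⋂ y ∈ C, {u | ⟪y - x, u⟫ ≤ 0} := by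
  ext u; simp [normalCone, real_inner_comm]

theorem convex_normalCone : Convex ℝ (normalCone C x) :=
  normalCone_eq_biInter ▸ convex_iInter₂ fun y _ =>
    convex_halfSpace_le (innerSL ℝ (y - x)).isLinear 0

theorem isClosed_normalCone : IsClosed (normalCone C x) :=
  normalCone_eq_biInter ▸ isClosed_biInter fun y _ =>
    isClosed_le (innerSL ℝ (y - x)).continuous continuous_const

theorem smul_mem_normalCone {t : ℝ} (ht : 0 ≤ t) (hu : u ∈ normalCone C x) :
    t • u ∈ normalCone C x := fun y hy => by
  rw [real_inner_smul_left]
  exact mul_nonpos_of_nonneg_of_nonpos ht (hu y hy)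

theorem smul_mem_normalCone_iff {t : ℝ} (ht : 0 < t) :
    t • u ∈ normalCone C x ↔ u ∈ normalCone C x :=
  ⟨fun h => inv_smul_smul₀ ht.ne' u ▸ smul_mem_normalCone (inv_nonneg.2 ht.le) h,
    smul_mem_normalCone ht.le⟩

theorem mul_norm_le_inner_of_mem_normalCone {r : ℝ} (hr : 0 ≤ r)
    (hball : Metric.closedBall z₀ r ⊆ C) (hu : u ∈ normalCone C z) : r * ‖u‖ ≤ ⟪z - z₀, u⟫ := by
  rcases eq_or_ne u 0 with rfl | hu0
  · simp
  have hnorm : 0 < ‖u‖ := norm_pos_iff.2 hu0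
  have hmem : z₀ + (r / ‖u‖) • u ∈ C := hball <| by
    rw [Metric.mem_closedBall, dist_eq_norm, add_sub_cancel_left, norm_smul, Real.norm_eq_abs,
      abs_div, abs_norm, abs_of_nonneg hr, div_mul_cancel₀ r hnorm.ne']
  have h := hu _ hmem
  rw [show z₀ + (r / ‖u‖) • u - z = (r / ‖u‖) • u - (z - z₀) by abel, inner_sub_right,
    real_inner_smul_right, real_inner_self_eq_norm_mul_norm, real_inner_comm] at h
  field_simp at h
  linarith

def supportSet (C : Set (EuclideanSpace ℝ (Fin m))) (u : EuclideanSpace ℝ (Fin m)) :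
    Set (EuclideanSpace ℝ (Fin m)) :=
  {x ∈ C | u ∈ normalCone C x}

theorem supportSet_eq_toExposed : supportSet C u = (innerSL ℝ u).toExposed C := by
  ext x
  simp [supportSet, normalCone, ContinuousLinearMap.toExposed, inner_sub_right]

theorem isExposed_supportSet : IsExposed ℝ C (supportSet C u) :=
  supportSet_eq_toExposed ▸ ContinuousLinearMap.toExposed.isExposed

theorem IsExposed.exists_eq_supportSet (hF : IsExposed ℝ C F) (hne : F.Nonempty) :
    ∃ u, F = supportSet C u := by
  obtain ⟨l, rfl⟩ := hF hne
  refine ⟨(InnerProductSpace.toDual ℝ _).symm l, ?_⟩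
  rw [supportSet_eq_toExposed]
  congr
  ext
  simp

@[simp] theorem supportSet_zero : supportSet C 0 = C := by
  ext x
  simp [supportSet, normalCone]

theorem supportSet_smul {t : ℝ} (ht : 0 < t) : supportSet C (t • u) = supportSet C u := by
  simp only [supportSet, smul_mem_normalCone_iff ht]

theorem IsCompact.supportSet_nonempty (hC : IsCompact C) (hne : C.Nonempty) :
    (supportSet C u).Nonempty := by
  obtain ⟨x, hx, hmax⟩ := hC.exists_isMaxOn hne (innerSL ℝ u).continuous.continuousOn
  exact ⟨x, supportSet_eq_toExposed ▸ ⟨hx, hmax⟩⟩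

theorem inner_sub_neg_of_notMem_supportSet (hz : z ∈ supportSet C u) (hx : x ∈ C)
    (hxu : x ∉ supportSet C u) : ⟪u, x - z⟫ < 0 := by
  refine (hz.2 x hx).lt_of_ne fun h => hxu ⟨hx, fun y hy => ?_⟩
  rw [show y - x = (y - z) - (x - z) by abel, inner_sub_right, h, sub_zero]
  exact hz.2 y hy

theorem notMem_supportSet_of_inner_sub_neg (hz : z ∈ C) (h : ⟪u, x - z⟫ < 0) :
    x ∉ supportSet C u := fun hx => by
  have := hx.2 z hz
  rw [← neg_sub, inner_neg_right] at this
  linarith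

theorem subset_supportSet_of_mem_intrinsicInterior (hFC : F ⊆ C)
    (hz : z ∈ intrinsicInterior ℝ F) (hu : u ∈ normalCone C z) : F ⊆ supportSet C u := by
  have hmax : IsMaxOn (innerₛₗ ℝ u) F z := fun y hy => by
    simpa [inner_sub_right] using hu y (hFC hy)
  intro f hf
  refine ⟨hFC hf, fun y hy => ?_⟩
  have := hmax.eq_of_mem_intrinsicInterior hz hf
  simp only [innerₛₗ_apply_apply] at this
  rw [inner_sub_right, this, ← inner_sub_right]
  exact hu y hy

theorem isCoatomExposedFace_supportSet (hy : y ∈ C)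
    (hNy : normalCone C y = {u | SameRay ℝ v u}) (hne : supportSet C v ≠ C) :
    IsCoatomExposedFace C (supportSet C v) := by
  refine ⟨isExposed_supportSet, hne, fun G hG hsub => ?_⟩
  have hyv : y ∈ supportSet C v := ⟨hy, hNy ▸ SameRay.rfl⟩
  obtain ⟨w, rfl⟩ := hG.exists_eq_supportSet ⟨y, hsub hyv⟩
  have hvw : w ∈ {u | SameRay ℝ v u} := hNy ▸ (hsub hyv).2
  rcases hvw with rfl | rfl | ⟨r₁, r₂, hr₁, hr₂, h⟩
  · exact absurd supportSet_zero hne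
  · exact Or.inr supportSet_zero
  · exact Or.inl (by rw [← supportSet_smul hr₂, ← h, supportSet_smul hr₁])

theorem isCoatomExposedFace_empty_singleton (x : EuclideanSpace ℝ (Fin m)) :
    IsCoatomExposedFace {x} ∅ :=
  ⟨isExposed_empty, (Set.singleton_nonempty x).ne_empty.symm,
    fun _ hG _ => Set.subset_singleton_iff_eq.1 hG.subset⟩

def NormalConeFacesAreNormalCones (C : Set (EuclideanSpace ℝ (Fin m))) : Prop :=
  ∀ z ∈ C, normalCone C z ≠ Set.univ → normalCone C z ≠ {0} →
    ∀ T : Set (EuclideanSpace ℝ (Fin m)), T.Nonempty → Convex ℝ T →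
      IsExtreme ℝ (normalCone C z) T → ∃ y ∈ C, normalCone C y = T

theorem exists_isCoatomExposedFace_supportSet (hint : (interior C).Nonempty)
    (hfaces : NormalConeFacesAreNormalCones C) {w : EuclideanSpace ℝ (Fin m)}
    (hz : z ∈ supportSet C w) (hx : x ∈ C) (hxw : x ∉ supportSet C w) :
    ∃ v ∈ normalCone C z, IsCoatomExposedFace C (supportSet C v) ∧ x ∉ supportSet C v := by
  obtain ⟨z₀, hz₀⟩ := hint
  obtain ⟨r, hr, hball⟩ :=
    Metric.nhds_basis_closedBall.mem_iff.1 (mem_interior_iff_mem_nhds.1 hz₀)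
  set K := normalCone C z
  set φ := innerSL ℝ (z - z₀)
  have hcone : ∀ u ∈ K, ∀ t : ℝ, 0 ≤ t → t • u ∈ K := fun u hu t ht => smul_mem_normalCone ht hu
  have hφ : ∀ u ∈ K, r * ‖u‖ ≤ φ u := fun u hu =>
    mul_norm_le_inner_of_mem_normalCone hr.le hball hu
  have hφpos : ∀ u ∈ K, u ≠ 0 → 0 < φ u := fun u hu hu0 =>
    (mul_pos hr (norm_pos_iff.2 hu0)).trans_le (hφ u hu)
  have hwx := inner_sub_neg_of_notMem_supportSet hz hx hxw
  have hw0 : w ≠ 0 := by rintro rfl; simp at hwx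
  obtain ⟨v, hv, hvx⟩ :=
    (isCompact_inter_preimage_one isClosed_normalCone hr hφ).exists_mem_extremePoints_lt
    (convex_normalCone.inter (convex_hyperplane φ.isLinear 1)) (innerSL ℝ (x - z))
    (inv_smul_mem_inter_preimage_one (φ := φ) hcone hφpos hz.2 hw0) (c := 0) (by
      rw [map_smul, smul_eq_mul, innerSL_apply_apply, real_inner_comm]
      exact mul_neg_of_pos_of_neg (inv_pos.2 (hφpos w hz.2 hw0)) hwx)
  have hKuniv : K ≠ Set.univ := fun h => by
    have := hφpos (-w) (h ▸ Set.mem_univ _) (neg_ne_zero.2 hw0)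
    linarith [map_neg φ w, hφpos w hz.2 hw0]
  have hK0 : K ≠ {0} := fun h => hw0 (h ▸ hz.2 : w ∈ ({0} : Set _))
  have hext : IsExtreme ℝ K {u | SameRay ℝ v u} :=
    isExtreme_setOf_sameRay (φ := (φ : EuclideanSpace ℝ (Fin m) →ₗ[ℝ] ℝ)) hcone hφpos hv
  obtain ⟨y, hy, hNy⟩ :=
    hfaces z hz.1 hKuniv hK0 _ ⟨v, SameRay.rfl⟩ (convex_setOf_sameRay v) hext
  have hxv : x ∉ supportSet C v :=
    notMem_supportSet_of_inner_sub_neg hz.1 (by rwa [innerSL_apply_apply, real_inner_comm] at hvx)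
  exact ⟨v, hv.1.1, isCoatomExposedFace_supportSet hy hNy fun h => hxv (h.ge hx), hxv⟩

theorem exists_isCoatomExposedFace_superset_notMem_of_nonempty (hC : Convex ℝ C)
    (hint : (interior C).Nonempty) (hfaces : NormalConeFacesAreNormalCones C)
    (hF : IsExposed ℝ C F) (hne : F.Nonempty) (hx : x ∈ C) (hxF : x ∉ F) :
    ∃ G, IsCoatomExposedFace C G ∧ F ⊆ G ∧ x ∉ G := by
  obtain ⟨w, rfl⟩ := hF.exists_eq_supportSet hne
  obtain ⟨z, hz⟩ := hne.intrinsicInterior (hF.convex hC)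
  obtain ⟨v, hv, hco, hxv⟩ :=
    exists_isCoatomExposedFace_supportSet hint hfaces (intrinsicInterior_subset hz) hx hxF
  exact ⟨_, hco, subset_supportSet_of_mem_intrinsicInterior hF.subset hz hv, hxv⟩

theorem exists_isCoatomExposedFace_superset_notMem (hC : Convex ℝ C) (hcomp : IsCompact C)
    (hint : (interior C).Nonempty) (hfaces : NormalConeFacesAreNormalCones C)
    (hF : IsExposed ℝ C F) (hx : x ∈ C) (hxF : x ∉ F) :
    ∃ G, IsCoatomExposedFace C G ∧ F ⊆ G ∧ x ∉ G := by
  rcases F.eq_empty_or_nonempty with rfl | hne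
  · by_cases hCx : C = {x}
    · subst hCx
      exact ⟨∅, isCoatomExposedFace_empty_singleton x, subset_rfl, Set.notMem_empty x⟩
    obtain ⟨c, hc, hcx⟩ : ∃ c ∈ C, c ≠ x := by
      by_contra! h
      exact hCx (Set.eq_singleton_iff_unique_mem.2 ⟨hx, h⟩)
    have hxc : x ∉ supportSet C (c - x) := notMem_supportSet_of_inner_sub_neg hc <| by
      rw [← neg_sub x c, inner_neg_left, neg_lt_zero, real_inner_self_pos]
      exact sub_ne_zero.2 hcx.symm
    obtain ⟨G, hG, -, hxG⟩ := exists_isCoatomExposedFace_superset_notMem_of_nonempty hC hint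
      hfaces isExposed_supportSet (hcomp.supportSet_nonempty ⟨x, hx⟩) hx hxc
    exact ⟨G, hG, Set.empty_subset G, hxG⟩
  · exact exists_isCoatomExposedFace_superset_notMem_of_nonempty hC hint hfaces hF hne hx hxF

end NormalCone

/-- if `C` is a convex body with nonempty interior such that every nonempty
face of every proper normal cone of `C` is a normal cone of `C`, then the lattice of exposed
faces of `C` is coatomistic: every exposed face `F` is the infimum (intersection within the
lattice, i.e. together with the top element `C`) of the coatoms containing it. -/
theorem stmt19 {m : ℕ} (C : Set (EuclideanSpace ℝ (Fin m))) (hC : Convex ℝ C)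
    (hcomp : IsCompact C) (hint : (interior C).Nonempty)
    (hfaces : ∀ z ∈ C, normalCone C z ≠ Set.univ → normalCone C z ≠ {0} →
      ∀ T : Set (EuclideanSpace ℝ (Fin m)), T.Nonempty → Convex ℝ T →
        IsExtreme ℝ (normalCone C z) T → ∃ y ∈ C, normalCone C y = T) :
    ∀ F, IsExposed ℝ C F → F = C ∩ ⋂₀ {G | IsCoatomExposedFace C G ∧ F ⊆ G} := by
  intro F hF
  ext x
  refine ⟨fun hx => ⟨hF.subset hx, fun G hG => hG.2 hx⟩, fun ⟨hxC, hxG⟩ => ?_⟩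
  by_contra hxF
  obtain ⟨G, hG, hFG, hxG'⟩ :=
    exists_isCoatomExposedFace_superset_notMem hC hcomp hint hfaces hF hxC hxF
  exact hxG' (hxG G ⟨hG, hFG⟩)
end
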